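/- Let G be a triconed graph with no coloops and let B be a spanning tree of G. Then the edge 01 belongs to B if and only if the vertices 0 and 1 lie in different connected components of the blueprint of φ1(B). -/

import Mathlib

attribute [-instance] Sym2.instPartialOrder

open scoped Classical

variable {V : Type} [Fintype V] [LinearOrder V] [LinearOrder (Sym2 V)]

/-- `T` is a spanning tree of the graph `G`, viewed as a set of edges. -/
def IsSpanningTree (G : SimpleGraph V) (T : Set (Sym2 V)) : Prop :=
  T ⊆ G.edgeSet ∧ (SimpleGraph.fromEdgeSet T).IsTree

/-- An edge `e` of the spanning tree `T` is internally passive (w.r.t. the edge order). -/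
def InternallyPassive (G : SimpleGraph V) (T : Set (Sym2 V)) (e : Sym2 V) : Prop :=
  e ∈ T ∧ ∃ f ∈ G.edgeSet, f ∉ T ∧ f < e ∧ IsSpanningTree G (insert f (T \ {e}))

/-- The passivity of a spanning tree: the number of internally passive edges. -/
noncomputable def passivity (G : SimpleGraph V) (T : Set (Sym2 V)) : ℕ :=
  {e : Sym2 V | InternallyPassive G T e}.ncard

/-- `A` is lexicographically smaller than `B` as (sorted lists of) sets of edges:
the minimum of the symmetric difference lies in `A`. -/
def EdgeSetLexLt (A B : Set (Sym2 V)) : Prop :=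
  ∃ e, e ∈ A ∧ e ∉ B ∧ ∀ f, (f ∈ A ∧ f ∉ B) ∨ (f ∈ B ∧ f ∉ A) → f ≠ e → e < f

/-- `B0` is the minimum spanning tree of `G`: the spanning tree whose sorted edge
list is lexicographically smallest. -/
def IsMinSpanningTree (G : SimpleGraph V) (B0 : Set (Sym2 V)) : Prop :=
  IsSpanningTree G B0 ∧ ∀ T, IsSpanningTree G T → T ≠ B0 → EdgeSetLexLt B0 T

/-- `G` has no coloops: every edge lies outside some spanning tree. -/
def NoColoops (G : SimpleGraph V) : Prop :=
  ∀ e ∈ G.edgeSet, ∃ T, IsSpanningTree G T ∧ e ∉ T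

/-- `G` is a triconed graph with distinguished path `v1 - v0 - v2`. -/
def IsTriconed (G : SimpleGraph V) (v0 v1 v2 : V) : Prop :=
  G.Connected ∧ v0 ≠ v1 ∧ v0 ≠ v2 ∧ v1 ≠ v2 ∧ G.Adj v0 v1 ∧ G.Adj v0 v2 ∧
    ∀ v, v ≠ v0 → v ≠ v1 → v ≠ v2 → G.Adj v0 v ∨ G.Adj v1 v ∨ G.Adj v2 v

/-- The vertex order puts `v0 < v1 < v2` first, then the remaining neighbors of `v0`,
then the remaining vertices adjacent to `v1`, then the rest. -/
def VertexOrderSpec (G : SimpleGraph V) (v0 v1 v2 : V) : Prop :=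
  v0 < v1 ∧ v1 < v2 ∧
  (∀ v, v ≠ v0 → v ≠ v1 → v ≠ v2 → v2 < v) ∧
  (∀ u u', u ≠ v0 → u ≠ v1 → u ≠ v2 → u' ≠ v0 → u' ≠ v1 → u' ≠ v2 →
    G.Adj v0 u → ¬G.Adj v0 u' → u < u') ∧
  (∀ u u', u ≠ v0 → u ≠ v1 → u ≠ v2 → u' ≠ v0 → u' ≠ v1 → u' ≠ v2 →
    ¬G.Adj v0 u → ¬G.Adj v0 u' → G.Adj v1 u → ¬G.Adj v1 u' → u < u')

/-- Smaller endpoint of an edge. -/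
def sym2Min (e : Sym2 V) : V :=
  Sym2.lift ⟨fun a b => min a b, fun a b => min_comm a b⟩ e

/-- Larger endpoint of an edge. -/
def sym2Max (e : Sym2 V) : V :=
  Sym2.lift ⟨fun a b => max a b, fun a b => max_comm a b⟩ e

/-- Lexicographic comparison of edges by their endpoints. -/
def Sym2Lex (e f : Sym2 V) : Prop :=
  sym2Min e < sym2Min f ∨ (sym2Min e = sym2Min f ∧ sym2Max e < sym2Max f)

/-- The block of an edge in the specified edge ordering: edges at `v0` first, then edges
joining `v1` to height-2 vertices, then edges joining `v2` to height-2 vertices not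
adjacent to `v1`, then the remaining edges. -/
noncomputable def edgeBlock (G : SimpleGraph V) (v0 v1 v2 : V) (e : Sym2 V) : ℕ :=
  if v0 ∈ e then 0
  else if ∃ x, e = s(v1, x) ∧ ¬G.Adj v0 x then 1
  else if ∃ x, e = s(v2, x) ∧ ¬G.Adj v0 x ∧ ¬G.Adj v1 x then 2
  else 3

/-- The edge order respects the blocks, and is lexicographic within the first three blocks. -/
def EdgeOrderSpec (G : SimpleGraph V) (v0 v1 v2 : V) : Prop :=
  (∀ e ∈ G.edgeSet, ∀ f ∈ G.edgeSet,
      edgeBlock G v0 v1 v2 e < edgeBlock G v0 v1 v2 f → e < f) ∧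
  (∀ e ∈ G.edgeSet, ∀ f ∈ G.edgeSet,
      edgeBlock G v0 v1 v2 e = edgeBlock G v0 v1 v2 f → edgeBlock G v0 v1 v2 e ≤ 2 →
      Sym2Lex e f → e < f)

/-- The edges of `G_red`: edges of `G` not in `B0` and not incident to `v0`. -/
def GredEdges (G : SimpleGraph V) (v0 : V) (B0 : Set (Sym2 V)) : Set (Sym2 V) :=
  {e | e ∈ G.edgeSet ∧ e ∉ B0 ∧ v0 ∉ e}

/-- `u` is a child of `p` in the spanning tree `B0` rooted at `v0`:
`s(u,p) ∈ B0` and removing this edge disconnects `u` from the root. -/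
def IsChildOf (B0 : Set (Sym2 V)) (v0 : V) (u p : V) : Prop :=
  s(u, p) ∈ B0 ∧ ¬(SimpleGraph.fromEdgeSet (B0 \ {s(u, p)})).Reachable u v0

/-- The type of a vertex: `1` if it is `v1` or a child of `v1`, `2` if it is `v2` or a
child of `v2`, and `0` otherwise. -/
noncomputable def vType (B0 : Set (Sym2 V)) (v0 v1 v2 : V) (u : V) : ℕ :=
  if u = v1 ∨ IsChildOf B0 v0 u v1 then 1
  else if u = v2 ∨ IsChildOf B0 v0 u v2 then 2
  else 0

/-- The height of a vertex other than `v0`: `1` if adjacent to `v0`, `2` otherwise. -/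
noncomputable def vHeight (G : SimpleGraph V) (v0 : V) (u : V) : ℕ :=
  if G.Adj v0 u then 1 else 2

/-- `(E, m)` is a marked spanning forest of `G_red`: an acyclic set of `G_red`-edges
with marks on vertices, each vertex carrying at most one mark except type-2 vertices
which may carry two. -/
def IsMarkedForest (G : SimpleGraph V) (v0 v1 v2 : V) (B0 : Set (Sym2 V))
    (E : Set (Sym2 V)) (m : V → ℕ) : Prop :=
  E ⊆ GredEdges G v0 B0 ∧ (SimpleGraph.fromEdgeSet E).IsAcyclic ∧ m v0 = 0 ∧
  ∀ v, m v ≤ if vType B0 v0 v1 v2 v = 2 then 2 else 1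

/-- Total number of marks in the component of `u`. -/
noncomputable def compMarks (E : Set (Sym2 V)) (m : V → ℕ) (u : V) : ℕ :=
  ∑ x : V, if (SimpleGraph.fromEdgeSet E).Reachable u x then m x else 0

/-- Number of marks of type `t` in the component of `u` (the extra mark of a doubly
marked vertex counting as a mark of type `0`). -/
noncomputable def markTypeCount (B0 : Set (Sym2 V)) (v0 v1 v2 : V)
    (E : Set (Sym2 V)) (m : V → ℕ) (u : V) (t : ℕ) : ℕ :=
  ∑ x : V, if (SimpleGraph.fromEdgeSet E).Reachable u x then
      ((if 1 ≤ m x ∧ vType B0 v0 v1 v2 x = t then 1 else 0) +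
        (if m x = 2 ∧ t = 0 then 1 else 0))
    else 0

/-- The component of `u` in `(E, m)` is correctly marked. -/
def CorrectlyMarkedComp (B0 : Set (Sym2 V)) (v0 v1 v2 : V)
    (E : Set (Sym2 V)) (m : V → ℕ) (u : V) : Prop :=
  1 ≤ compMarks E m u ∧
  ((SimpleGraph.fromEdgeSet E).Reachable u v1 → 1 ≤ m v1) ∧
  ((SimpleGraph.fromEdgeSet E).Reachable u v2 → 1 ≤ m v2) ∧
  (∀ t, markTypeCount B0 v0 v1 v2 E m u t ≤ 1) ∧
  (∀ x, (SimpleGraph.fromEdgeSet E).Reachable u x → m x = 2 →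
    ∃ x', (SimpleGraph.fromEdgeSet E).Reachable u x' ∧ x' ≠ x ∧ 1 ≤ m x')

/-- The multiplicity of the blueprint edge `{a, b}`: the number of 2-components whose
marks have types `a` and `b`, plus (for `{a,b} ∈ {{0,1},{0,2}}`) the number of
3-components. -/
noncomputable def bpMult (B0 : Set (Sym2 V)) (v0 v1 v2 : V)
    (E : Set (Sym2 V)) (m : V → ℕ) (a b : ℕ) : ℕ :=
  {c : (SimpleGraph.fromEdgeSet E).ConnectedComponent |
    ∃ u, u ≠ v0 ∧ (SimpleGraph.fromEdgeSet E).connectedComponentMk u = c ∧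
      ((compMarks E m u = 2 ∧ a ≠ b ∧
          1 ≤ markTypeCount B0 v0 v1 v2 E m u a ∧ 1 ≤ markTypeCount B0 v0 v1 v2 E m u b) ∨
        (compMarks E m u = 3 ∧
          (({a, b} : Set ℕ) = {0, 1} ∨ ({a, b} : Set ℕ) = {0, 2})))}.ncard

/-- The blueprint (a multigraph on `{0,1,2}`) is acyclic. -/
def bpAcyclic (B0 : Set (Sym2 V)) (v0 v1 v2 : V) (E : Set (Sym2 V)) (m : V → ℕ) : Prop :=
  bpMult B0 v0 v1 v2 E m 0 1 ≤ 1 ∧ bpMult B0 v0 v1 v2 E m 0 2 ≤ 1 ∧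
  bpMult B0 v0 v1 v2 E m 1 2 ≤ 1 ∧
  ¬(1 ≤ bpMult B0 v0 v1 v2 E m 0 1 ∧ 1 ≤ bpMult B0 v0 v1 v2 E m 0 2 ∧
      1 ≤ bpMult B0 v0 v1 v2 E m 1 2)

/-- The vertices `a` and `b` of the blueprint lie in the same connected component. -/
def bpConnected (B0 : Set (Sym2 V)) (v0 v1 v2 : V) (E : Set (Sym2 V)) (m : V → ℕ)
    (a b : ℕ) : Prop :=
  a = b ∨ 1 ≤ bpMult B0 v0 v1 v2 E m a b ∨
    ∃ c, c ∈ ({0, 1, 2} : Set ℕ) ∧ c ≠ a ∧ c ≠ b ∧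
      1 ≤ bpMult B0 v0 v1 v2 E m a c ∧ 1 ≤ bpMult B0 v0 v1 v2 E m c b

/-- `(E, m)` is a trirooted forest of `G_red`. -/
def IsTriRootedForest (G : SimpleGraph V) (v0 v1 v2 : V) (B0 : Set (Sym2 V))
    (E : Set (Sym2 V)) (m : V → ℕ) : Prop :=
  IsMarkedForest G v0 v1 v2 B0 E m ∧
  (∀ u, u ≠ v0 → CorrectlyMarkedComp B0 v0 v1 v2 E m u) ∧
  bpAcyclic B0 v0 v1 v2 E m

/-- `v` receives the extra mark coming from the edge `02`: `02 ∈ B`, there is a path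
from `v2` to `v1` in `B` avoiding `02`, and `v` is the endpoint closer to `v2` of the
first edge of this path not in `B0`. -/
def DoublyMarkedAt (B0 B : Set (Sym2 V)) (v0 v1 v2 : V) (v : V) : Prop :=
  s(v0, v2) ∈ B ∧
  ∃ p : (SimpleGraph.fromEdgeSet B).Walk v2 v1, p.IsPath ∧ s(v0, v2) ∉ p.edges ∧
    ∃ i : ℕ, (∀ j < i, ∀ e, p.edges[j]? = some e → e ∈ B0) ∧
      (∃ e, p.edges[i]? = some e ∧ e ∉ B0) ∧ v = p.getVert i

/-- `(E, m)` is the marked spanning forest `φ₁(B)` associated to the spanning tree `B`. -/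
def IsPhi1 (G : SimpleGraph V) (v0 v1 v2 : V) (B0 B : Set (Sym2 V))
    (E : Set (Sym2 V)) (m : V → ℕ) : Prop :=
  E = B ∩ GredEdges G v0 B0 ∧
  (∀ v, m v ≤ 2) ∧
  (∀ v, 1 ≤ m v ↔ (v = v1 ∨ v = v2 ∨ ∃ p, IsChildOf B0 v0 v p ∧ s(v, p) ∈ B)) ∧
  (∀ v, m v = 2 ↔ DoublyMarkedAt B0 B v0 v1 v2 v)

/-- `(S, E)` is a (sub)tree of `G_red` with vertex set `S` and edge set `E`. -/
def IsSubTree (G : SimpleGraph V) (v0 : V) (B0 : Set (Sym2 V))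
    (S : Set V) (E : Set (Sym2 V)) : Prop :=
  S.Nonempty ∧ v0 ∉ S ∧ E ⊆ GredEdges G v0 B0 ∧
  (∀ e ∈ E, ∀ x ∈ e, x ∈ S) ∧
  (∀ u ∈ S, ∀ x ∈ S, (SimpleGraph.fromEdgeSet E).Reachable u x) ∧
  (SimpleGraph.fromEdgeSet E).IsAcyclic

/-- Total number of marks of the marked tree `(S, m)`. -/
noncomputable def treeTotalMarks (S : Set V) (m : V → ℕ) : ℕ :=
  ∑ x : V, if x ∈ S then m x else 0

/-- Number of marks of type `t` of the marked tree `(S, m)`. -/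
noncomputable def treeMarkTypeCount (B0 : Set (Sym2 V)) (v0 v1 v2 : V)
    (S : Set V) (m : V → ℕ) (t : ℕ) : ℕ :=
  ∑ x : V, if x ∈ S then
      ((if 1 ≤ m x ∧ vType B0 v0 v1 v2 x = t then 1 else 0) +
        (if m x = 2 ∧ t = 0 then 1 else 0))
    else 0

/-- `(S, E, m)` is a correctly marked tree of `G_red`. -/
def IsCorrectlyMarkedTree (G : SimpleGraph V) (v0 v1 v2 : V) (B0 : Set (Sym2 V))
    (S : Set V) (E : Set (Sym2 V)) (m : V → ℕ) : Prop :=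
  IsSubTree G v0 B0 S E ∧
  (∀ v, v ∉ S → m v = 0) ∧
  (∀ v, m v ≤ if vType B0 v0 v1 v2 v = 2 then 2 else 1) ∧
  1 ≤ treeTotalMarks S m ∧
  (v1 ∈ S → 1 ≤ m v1) ∧ (v2 ∈ S → 1 ≤ m v2) ∧
  (∀ t, treeMarkTypeCount B0 v0 v1 v2 S m t ≤ 1) ∧
  (∀ x ∈ S, m x = 2 → ∃ x' ∈ S, x' ≠ x ∧ 1 ≤ m x')

/-- Number of effective marks: marks at normal vertices together with the extra marks
of doubly marked vertices. -/
noncomputable def effMarks (v1 v2 : V) (S : Set V) (m : V → ℕ) : ℕ :=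
  treeTotalMarks S m -
    ((if v1 ∈ S ∧ 1 ≤ m v1 then 1 else 0) + (if v2 ∈ S ∧ 1 ≤ m v2 then 1 else 0))

/-- Number of passive effective marks: an effective mark is passive unless it is the
unique mark of the tree and lies at the smallest vertex of the tree. -/
noncomputable def passiveEffMarks (v1 v2 : V) (S : Set V) (m : V → ℕ) : ℕ :=
  effMarks v1 v2 S m -
    (if ∃ v ∈ S, v ≠ v1 ∧ v ≠ v2 ∧ 1 ≤ m v ∧ treeTotalMarks S m = 1 ∧ ∀ u ∈ S, v ≤ u
      then 1 else 0)

/-- Total excess `Σ_{e ∈ E} (w e - 1)` of the edge weights. -/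
noncomputable def excessWeightSum (E : Set (Sym2 V)) (w : Sym2 V → ℕ) : ℕ :=
  ∑ e : Sym2 V, if e ∈ E then w e - 1 else 0

/-- Excess weight of the weighted tree `(S, E, w)`. -/
noncomputable def excessWeight (v1 v2 : V) (S : Set V) (E : Set (Sym2 V))
    (w : Sym2 V → ℕ) : ℕ :=
  (if v1 ∈ S then 1 else 0) + (if v2 ∈ S then 1 else 0) + excessWeightSum E w

/-- Total weight `Σ_{e ∈ E} w e`, i.e. the total degree of the associated monomial. -/
noncomputable def totalWeight (E : Set (Sym2 V)) (w : Sym2 V → ℕ) : ℕ :=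
  ∑ e : Sym2 V, if e ∈ E then w e else 0

/-- All pairs of weighted objects of the weighted tree `(S, E, w)` are compatible:
the endpoints of the smallest path containing any two weighted objects have
different types. -/
def WeightedObjectsCompatible (B0 : Set (Sym2 V)) (v0 v1 v2 : V)
    (S : Set V) (E : Set (Sym2 V)) (w : Sym2 V → ℕ) : Prop :=
  (∀ vsp ∈ ({v1, v2} : Set V), vsp ∈ S → ∀ x y, s(x, y) ∈ E → 2 ≤ w s(x, y) →
      (SimpleGraph.fromEdgeSet (E \ {s(x, y)})).Reachable vsp x →
      vType B0 v0 v1 v2 vsp ≠ vType B0 v0 v1 v2 y) ∧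
  (∀ x y p q, s(x, y) ∈ E → s(p, q) ∈ E → s(x, y) ≠ s(p, q) →
      2 ≤ w s(x, y) → 2 ≤ w s(p, q) →
      (SimpleGraph.fromEdgeSet (E \ {s(x, y)})).Reachable x p →
      (SimpleGraph.fromEdgeSet (E \ {s(p, q)})).Reachable p x →
      vType B0 v0 v1 v2 y ≠ vType B0 v0 v1 v2 q) ∧
  (∀ x y, s(x, y) ∈ E → 3 ≤ w s(x, y) → vType B0 v0 v1 v2 x ≠ vType B0 v0 v1 v2 y)

/-- `(S, E, w)` is a correctly weighted tree of `G_red`. -/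
def IsCorrectlyWeightedTree (G : SimpleGraph V) (v0 v1 v2 : V) (B0 : Set (Sym2 V))
    (S : Set V) (E : Set (Sym2 V)) (w : Sym2 V → ℕ) : Prop :=
  IsSubTree G v0 B0 S E ∧
  (∀ e ∈ E, 1 ≤ w e) ∧
  excessWeight v1 v2 S E w ≤ 3 ∧
  (2 ≤ excessWeight v1 v2 S E w → WeightedObjectsCompatible B0 v0 v1 v2 S E w) ∧
  (∀ x y, s(x, y) ∈ E → w s(x, y) ≤ vHeight G v0 x + vHeight G v0 y) ∧
  (∀ x y, s(x, y) ∈ E → w s(x, y) = vHeight G v0 x + vHeight G v0 y →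
    ∀ e ∈ E, e ≠ s(x, y) → w e ≤ 2)

/-- `s(v, x)` is the edge incident to `v` on the unique path from `v` to `u` in the
tree with edge set `E`. -/
def PathFirstEdge (E : Set (Sym2 V)) (v u : V) (x : V) : Prop :=
  s(v, x) ∈ E ∧ ¬(SimpleGraph.fromEdgeSet (E \ {s(v, x)})).Reachable v u

/-- `z` lies on the (unique) path between `a` and `b` in the forest with edge set `E`. -/
def OnPathBetween (E : Set (Sym2 V)) (a b z : V) : Prop :=
  ∃ p : (SimpleGraph.fromEdgeSet E).Walk a b, p.IsPath ∧ z ∈ p.support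

/-- `s(x, y)` (with `x` nearer `z`, `y` nearer `v`) is the first edge along the path
from the sandwiched mark `z` towards `v` whose endpoint closer to `v` has type
different from that of `wv` and whose endpoint closer to `wv` has type different
from that of `v`. -/
def SandwichEdge (B0 : Set (Sym2 V)) (v0 v1 v2 : V) (E : Set (Sym2 V))
    (z v wv : V) (x y : V) : Prop :=
  s(x, y) ∈ E ∧
  ¬(SimpleGraph.fromEdgeSet (E \ {s(x, y)})).Reachable z v ∧
  (SimpleGraph.fromEdgeSet (E \ {s(x, y)})).Reachable z x ∧
  vType B0 v0 v1 v2 y ≠ vType B0 v0 v1 v2 wv ∧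
  vType B0 v0 v1 v2 x ≠ vType B0 v0 v1 v2 v ∧
  ∀ x' y', s(x', y') ∈ E →
    ¬(SimpleGraph.fromEdgeSet (E \ {s(x', y')})).Reachable z x →
    (SimpleGraph.fromEdgeSet (E \ {s(x', y')})).Reachable z x' →
    (vType B0 v0 v1 v2 y' = vType B0 v0 v1 v2 wv ∨ vType B0 v0 v1 v2 x' = vType B0 v0 v1 v2 v)

/-- `w` is the weighting `φ₂(S, E, m)` produced by the empowerment algorithm applied
to the correctly marked tree `(S, E, m)` (only the weights of edges of `E` are
constrained). -/
def IsPhi2 (B0 : Set (Sym2 V)) (v0 v1 v2 : V)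
    (S : Set V) (E : Set (Sym2 V)) (m : V → ℕ) (w : Sym2 V → ℕ) : Prop :=
  (treeTotalMarks S m = 1 →
    ∃ v ∈ S, m v = 1 ∧
      (((∀ u ∈ S, v ≤ u) ∧ ∀ e ∈ E, w e = 1) ∨
        (¬(∀ u ∈ S, v ≤ u) ∧ ∃ u0 ∈ S, (∀ u ∈ S, u0 ≤ u) ∧
          ∃ x, PathFirstEdge E v u0 x ∧ ∀ e ∈ E, w e = if e = s(v, x) then 2 else 1))) ∧
  (treeTotalMarks S m = 2 →
    ∃ v ∈ S, ∃ u ∈ S, v ≠ u ∧ m v = 1 ∧ m u = 1 ∧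
      ∃ x y, PathFirstEdge E v u x ∧ PathFirstEdge E u v y ∧
        ∀ e ∈ E, w e = 1 + (if v ≠ v1 ∧ v ≠ v2 ∧ e = s(v, x) then 1 else 0)
                        + (if u ≠ v1 ∧ u ≠ v2 ∧ e = s(u, y) then 1 else 0)) ∧
  (treeTotalMarks S m = 3 →
    ((∃ a ∈ S, ∃ b ∈ S, ∃ c ∈ S, a ≠ b ∧ a ≠ c ∧ b ≠ c ∧ m a = 1 ∧ m b = 1 ∧ m c = 1 ∧
        ¬OnPathBetween E b c a ∧ ¬OnPathBetween E a c b ∧ ¬OnPathBetween E a b c ∧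
        ∃ xa xb xc, PathFirstEdge E a b xa ∧ PathFirstEdge E b a xb ∧
          PathFirstEdge E c a xc ∧
          ∀ e ∈ E, w e = 1 + (if a ≠ v1 ∧ a ≠ v2 ∧ e = s(a, xa) then 1 else 0)
                          + (if b ≠ v1 ∧ b ≠ v2 ∧ e = s(b, xb) then 1 else 0)
                          + (if c ≠ v1 ∧ c ≠ v2 ∧ e = s(c, xc) then 1 else 0)) ∨
      (∃ v ∈ S, ∃ wv ∈ S, ∃ z ∈ S, v ≠ wv ∧ v ≠ z ∧ 1 ≤ m v ∧ 1 ≤ m wv ∧ 1 ≤ m z ∧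
        OnPathBetween E v wv z ∧ (z = wv → m wv = 2) ∧
        (z ≠ wv → m v = 1 ∧ m wv = 1 ∧ m z = 1) ∧
        vType B0 v0 v1 v2 v < vType B0 v0 v1 v2 wv ∧
        ∃ xv xw xz yz, PathFirstEdge E v wv xv ∧ PathFirstEdge E wv v xw ∧
          SandwichEdge B0 v0 v1 v2 E z v wv xz yz ∧
          ∀ e ∈ E, w e = 1 + (if v ≠ v1 ∧ v ≠ v2 ∧ e = s(v, xv) then 1 else 0)
                          + (if wv ≠ v1 ∧ wv ≠ v2 ∧ e = s(wv, xw) then 1 else 0)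
                          + (if e = s(xz, yz) then 1 else 0))))

/-- The vertex set of the component of `u` in the forest with edge set `E`. -/
def compVerts (E : Set (Sym2 V)) (u : V) : Set V :=
  {x | (SimpleGraph.fromEdgeSet E).Reachable u x}

/-- The edge set of the component of `u` in the forest with edge set `E`. -/
def compEdges (E : Set (Sym2 V)) (u : V) : Set (Sym2 V) :=
  {e | e ∈ E ∧ ∀ x ∈ e, (SimpleGraph.fromEdgeSet E).Reachable u x}

/-- `w` is the weighting `φ₂(E, m)` of the marked forest `(E, m)`, obtained by applying
the empowerment algorithm to every component. -/
def IsPhi2Forest (B0 : Set (Sym2 V)) (v0 v1 v2 : V)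
    (E : Set (Sym2 V)) (m : V → ℕ) (w : Sym2 V → ℕ) : Prop :=
  ∀ u, u ≠ v0 → IsPhi2 B0 v0 v1 v2 (compVerts E u) (compEdges E u)
      (fun v => if v ∈ compVerts E u then m v else 0) w

/-- `(h_0, …, h_r)` is a pure O-sequence. -/
def IsPureOSeq (r : ℕ) (h : ℕ → ℕ) : Prop :=
  ∃ (σ : Type) (_ : Finite σ) (X : Set (σ →₀ ℕ)),
    X.Finite ∧
    (∀ μ ∈ X, ∀ ν : σ →₀ ℕ, ν ≤ μ → ν ∈ X) ∧
    (∀ μ ∈ X, ∀ ν ∈ X, (∀ ρ ∈ X, μ ≤ ρ → ρ = μ) → (∀ ρ ∈ X, ν ≤ ρ → ρ = ν) →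
        μ.sum (fun _ n => n) = ν.sum (fun _ n => n)) ∧
    (∀ i, {μ ∈ X | μ.sum (fun _ n => n) = i}.ncard = if i ≤ r then h i else 0)

section Statements

variable (G : SimpleGraph V) (v0 v1 v2 : V) (B0 : Set (Sym2 V))

set_option linter.unusedSectionVars false

open SimpleGraph in
lemma auxWalkClosed {F : Set (Sym2 V)} {S : Set V}
    (hS : ∀ x y : V, s(x, y) ∈ F → x ∈ S → y ∈ S) :
    ∀ {a b : V}, (SimpleGraph.fromEdgeSet F).Walk a b → a ∈ S → b ∈ S := by
  intro a b w
  induction w with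
  | nil => exact id
  | cons h p ih => exact fun ha => ih (hS _ _ ((SimpleGraph.fromEdgeSet_adj F).1 h).1 ha)

lemma auxReachClosed {F : Set (Sym2 V)} {S : Set V}
    (hS : ∀ x y : V, s(x, y) ∈ F → x ∈ S → y ∈ S) {a b : V}
    (h : (SimpleGraph.fromEdgeSet F).Reachable a b) (ha : a ∈ S) : b ∈ S := by
  obtain ⟨w⟩ := h; exact auxWalkClosed hS w ha

lemma auxFesSdiff (T : Set (Sym2 V)) (e : Sym2 V) :
    SimpleGraph.fromEdgeSet T \ SimpleGraph.fromEdgeSet {e}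
      = SimpleGraph.fromEdgeSet (T \ {e}) := by
  ext x y
  simp only [SimpleGraph.sdiff_adj, SimpleGraph.fromEdgeSet_adj, Set.mem_diff,
    Set.mem_singleton_iff]
  tauto

lemma auxTreeBridge {T : Set (Sym2 V)} (hT : (SimpleGraph.fromEdgeSet T).IsTree) {a b : V}
    (hab : s(a, b) ∈ T) (hne : a ≠ b) :
    ¬ (SimpleGraph.fromEdgeSet (T \ {s(a, b)})).Reachable a b := by
  have hmem : s(a, b) ∈ (SimpleGraph.fromEdgeSet T).edgeSet :=
    (SimpleGraph.mem_edgeSet _).2 ((SimpleGraph.fromEdgeSet_adj T).2 ⟨hab, hne⟩)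
  have hbr := (SimpleGraph.isAcyclic_iff_forall_edge_isBridge.mp hT.IsAcyclic) hmem
  have h2 := SimpleGraph.isBridge_iff.mp hbr
  unfold SimpleGraph.deleteEdges at h2
  rwa [auxFesSdiff] at h2

lemma auxReachOfMem {F : Set (Sym2 V)} {a b : V} (h : s(a, b) ∈ F) (hne : a ≠ b) :
    (SimpleGraph.fromEdgeSet F).Reachable a b :=
  ((SimpleGraph.fromEdgeSet_adj F).2 ⟨h, hne⟩).reachable

lemma auxReachMono {F F' : Set (Sym2 V)} (h : F ⊆ F') {a b : V}
    (hr : (SimpleGraph.fromEdgeSet F).Reachable a b) :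
    (SimpleGraph.fromEdgeSet F').Reachable a b :=
  hr.mono (SimpleGraph.fromEdgeSet_mono h)

open SimpleGraph in
lemma auxIsPathConcat {G' : SimpleGraph V} {u v w : V} {p : G'.Walk u v} (hp : p.IsPath)
    (h : G'.Adj v w) (hw : w ∉ p.support) : (p.concat h).IsPath := by
  rw [← SimpleGraph.Walk.isPath_reverse_iff, SimpleGraph.Walk.reverse_concat]
  rw [SimpleGraph.Walk.cons_isPath_iff]
  exact ⟨hp.reverse, by simpa using hw⟩

/-- children of `v1` -/
def chP1 (x : V) : Prop := ¬ G.Adj v0 x ∧ x ≠ v0 ∧ G.Adj v1 x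

/-- children of `v2` -/
def chP2 (x : V) : Prop := ¬ G.Adj v0 x ∧ x ≠ v0 ∧ ¬ G.Adj v1 x ∧ G.Adj v2 x

/-- the explicit minimum spanning tree -/
def specB0 : Set (Sym2 V) :=
  {e | (∃ x, e = s(v0, x) ∧ G.Adj v0 x) ∨ (∃ x, e = s(v1, x) ∧ chP1 G v0 v1 x) ∨
       (∃ x, e = s(v2, x) ∧ chP2 G v0 v1 v2 x)}

lemma specB0_sub : specB0 G v0 v1 v2 ⊆ G.edgeSet := by
  rintro e (⟨x, rfl, h⟩ | ⟨x, rfl, h⟩ | ⟨x, rfl, h⟩)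
  · exact (SimpleGraph.mem_edgeSet G).2 h
  · exact (SimpleGraph.mem_edgeSet G).2 h.2.2
  · exact (SimpleGraph.mem_edgeSet G).2 h.2.2.2

lemma specB0_cases {a b : V} (h : s(a, b) ∈ specB0 G v0 v1 v2) :
    (a = v0 ∧ G.Adj v0 b) ∨ (b = v0 ∧ G.Adj v0 a) ∨
    (a = v1 ∧ chP1 G v0 v1 b) ∨ (b = v1 ∧ chP1 G v0 v1 a) ∨
    (a = v2 ∧ chP2 G v0 v1 v2 b) ∨ (b = v2 ∧ chP2 G v0 v1 v2 a) := by
  rcases h with ⟨x, hx, h'⟩ | ⟨x, hx, h'⟩ | ⟨x, hx, h'⟩ <;>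
    rw [Sym2.eq_iff] at hx <;>
    rcases hx with ⟨h1, h2⟩ | ⟨h1, h2⟩
  · exact Or.inl ⟨h1, by rw [h2]; exact h'⟩
  · exact Or.inr (Or.inl ⟨h2, by rw [h1]; exact h'⟩)
  · exact Or.inr (Or.inr (Or.inl ⟨h1, by rw [h2]; exact h'⟩))
  · exact Or.inr (Or.inr (Or.inr (Or.inl ⟨h2, by rw [h1]; exact h'⟩)))
  · exact Or.inr (Or.inr (Or.inr (Or.inr (Or.inl ⟨h1, by rw [h2]; exact h'⟩))))
  · exact Or.inr (Or.inr (Or.inr (Or.inr (Or.inr ⟨h2, by rw [h1]; exact h'⟩))))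

lemma mem_specB0_star {x : V} (h : G.Adj v0 x) : s(v0, x) ∈ specB0 G v0 v1 v2 :=
  Or.inl ⟨x, rfl, h⟩

lemma mem_specB0_ch1 {x : V} (h : chP1 G v0 v1 x) : s(v1, x) ∈ specB0 G v0 v1 v2 :=
  Or.inr (Or.inl ⟨x, rfl, h⟩)

lemma mem_specB0_ch2 {x : V} (h : chP2 G v0 v1 v2 x) : s(v2, x) ∈ specB0 G v0 v1 v2 :=
  Or.inr (Or.inr ⟨x, rfl, h⟩)

lemma auxNR1 (hG : IsTriconed G v0 v1 v2) {x : V} (hx : G.Adj v0 x)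
    (h : (SimpleGraph.fromEdgeSet (specB0 G v0 v1 v2 \ {s(v0, x)})).Reachable x v0) :
    False := by
  obtain ⟨hconn, hn01, hn02, hn12, ha1, ha2, htri⟩ := hG
  have hxv0 : x ≠ v0 := fun hh => G.loopless.irrefl v0 (hh ▸ hx)
  have hcl : ∀ a b : V, s(a, b) ∈ specB0 G v0 v1 v2 \ {s(v0, x)} →
      a ∈ {z | z = x ∨ (chP1 G v0 v1 z ∧ x = v1) ∨ (chP2 G v0 v1 v2 z ∧ x = v2)} →
      b ∈ {z | z = x ∨ (chP1 G v0 v1 z ∧ x = v1) ∨ (chP2 G v0 v1 v2 z ∧ x = v2)} := by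
    rintro a b ⟨hmem, hne⟩ ha
    rw [Set.mem_singleton_iff] at hne
    rcases specB0_cases G v0 v1 v2 hmem with ⟨h₁, hadj⟩ | ⟨h₁, hadj⟩ | ⟨h₁, hch⟩ |
      ⟨h₁, hch⟩ | ⟨h₁, hch⟩ | ⟨h₁, hch⟩
    · rcases ha with h' | ⟨hc, _⟩ | ⟨hc, _⟩
      · exact absurd (h'.symm.trans h₁) hxv0
      · exact absurd h₁ hc.2.1
      · exact absurd h₁ hc.2.1
    · rcases ha with h' | ⟨hc, _⟩ | ⟨hc, _⟩
      · exact absurd (by rw [h', h₁]; exact Sym2.eq_swap) hne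
      · exact absurd hadj hc.1
      · exact absurd hadj hc.1
    · rcases ha with h' | ⟨hc, _⟩ | ⟨hc, _⟩
      · exact Or.inr (Or.inl ⟨hch, h'.symm.trans h₁⟩)
      · have := hc.2.2; rw [h₁] at this; exact absurd this (G.loopless.irrefl v1)
      · have := hc.1; rw [h₁] at this; exact absurd ha1 this
    · rcases ha with h' | ⟨hc, hxx⟩ | ⟨hc, _⟩
      · exact absurd (by rw [h']; exact hx) hch.1
      · exact Or.inl (h₁.trans hxx.symm)
      · exact absurd hch.2.2 hc.2.2.1
    · rcases ha with h' | ⟨hc, _⟩ | ⟨hc, _⟩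
      · exact Or.inr (Or.inr ⟨hch, h'.symm.trans h₁⟩)
      · have := hc.1; rw [h₁] at this; exact absurd ha2 this
      · have := hc.1; rw [h₁] at this; exact absurd ha2 this
    · rcases ha with h' | ⟨hc, _⟩ | ⟨hc, hxx⟩
      · exact absurd (by rw [h']; exact hx) hch.1
      · exact absurd hc.2.2 hch.2.2.1
      · exact Or.inl (h₁.trans hxx.symm)
  have hv0 := auxReachClosed hcl h (Or.inl rfl)
  rcases hv0 with h' | ⟨hc, _⟩ | ⟨hc, _⟩
  · exact hxv0 h'.symm
  · exact hc.2.1 rfl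
  · exact hc.2.1 rfl

lemma auxNR2 (hG : IsTriconed G v0 v1 v2) {x y : V} (hx : chP1 G v0 v1 x)
    (h : (SimpleGraph.fromEdgeSet (specB0 G v0 v1 v2 \ {s(v1, x)})).Reachable x y) :
    y = x := by
  obtain ⟨hconn, hn01, hn02, hn12, ha1, ha2, htri⟩ := hG
  have hcl : ∀ a b : V, s(a, b) ∈ specB0 G v0 v1 v2 \ {s(v1, x)} →
      a ∈ ({x} : Set V) → b ∈ ({x} : Set V) := by
    rintro a b ⟨hmem, hne⟩ ha
    rw [Set.mem_singleton_iff] at hne ha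
    rcases specB0_cases G v0 v1 v2 hmem with ⟨h₁, hadj⟩ | ⟨h₁, hadj⟩ | ⟨h₁, hch⟩ |
      ⟨h₁, hch⟩ | ⟨h₁, hch⟩ | ⟨h₁, hch⟩
    · exact absurd (ha.symm.trans h₁) hx.2.1
    · rw [ha] at hadj; exact absurd hadj hx.1
    · have hxx : x = v1 := ha.symm.trans h₁
      exact absurd (hxx ▸ hx.2.2) (G.loopless.irrefl v1)
    · exact absurd (by rw [ha, h₁]; exact Sym2.eq_swap) hne
    · have hxx : x = v2 := ha.symm.trans h₁
      exact absurd (by rw [hxx]; exact ha2) hx.1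
    · rw [ha] at hch; exact absurd hx.2.2 hch.2.2.1
  exact auxReachClosed hcl h rfl

lemma auxNR3 (hG : IsTriconed G v0 v1 v2) {x y : V} (hx : chP2 G v0 v1 v2 x)
    (h : (SimpleGraph.fromEdgeSet (specB0 G v0 v1 v2 \ {s(v2, x)})).Reachable x y) :
    y = x := by
  obtain ⟨hconn, hn01, hn02, hn12, ha1, ha2, htri⟩ := hG
  have hcl : ∀ a b : V, s(a, b) ∈ specB0 G v0 v1 v2 \ {s(v2, x)} →
      a ∈ ({x} : Set V) → b ∈ ({x} : Set V) := by
    rintro a b ⟨hmem, hne⟩ ha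
    rw [Set.mem_singleton_iff] at hne ha
    rcases specB0_cases G v0 v1 v2 hmem with ⟨h₁, hadj⟩ | ⟨h₁, hadj⟩ | ⟨h₁, hch⟩ |
      ⟨h₁, hch⟩ | ⟨h₁, hch⟩ | ⟨h₁, hch⟩
    · exact absurd (ha.symm.trans h₁) hx.2.1
    · rw [ha] at hadj; exact absurd hadj hx.1
    · have hxx : x = v1 := ha.symm.trans h₁
      exact absurd (by rw [hxx]; exact ha1) hx.1
    · rw [ha] at hch; exact absurd hch.2.2 hx.2.2.1
    · have hxx : x = v2 := ha.symm.trans h₁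
      exact absurd (by rw [hxx]; exact ha2) hx.1
    · exact absurd (by rw [ha, h₁]; exact Sym2.eq_swap) hne
  exact auxReachClosed hcl h rfl

lemma specB0_reach_v0 (hG : IsTriconed G v0 v1 v2) (a : V) :
    (SimpleGraph.fromEdgeSet (specB0 G v0 v1 v2)).Reachable a v0 := by
  obtain ⟨hconn, hn01, hn02, hn12, ha1, ha2, htri⟩ := hG
  by_cases h0 : a = v0
  · exact h0 ▸ SimpleGraph.Reachable.refl a
  by_cases hadj : G.Adj v0 a
  · exact (auxReachOfMem (mem_specB0_star G v0 v1 v2 hadj) (fun h => h0 h.symm)).symm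
  have hv1 : a ≠ v1 := fun h => hadj (h ▸ ha1)
  have hv2 : a ≠ v2 := fun h => hadj (h ▸ ha2)
  have r01 : (SimpleGraph.fromEdgeSet (specB0 G v0 v1 v2)).Reachable v1 v0 :=
    (auxReachOfMem (mem_specB0_star G v0 v1 v2 ha1) hn01).symm
  have r02 : (SimpleGraph.fromEdgeSet (specB0 G v0 v1 v2)).Reachable v2 v0 :=
    (auxReachOfMem (mem_specB0_star G v0 v1 v2 ha2) hn02).symm
  rcases htri a h0 hv1 hv2 with h | h | h
  · exact absurd h hadj
  · have hch : chP1 G v0 v1 a := ⟨hadj, h0, h⟩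
    exact ((auxReachOfMem (mem_specB0_ch1 G v0 v1 v2 hch) (fun hh => hv1 hh.symm)).symm).trans r01
  · by_cases h1 : G.Adj v1 a
    · have hch : chP1 G v0 v1 a := ⟨hadj, h0, h1⟩
      exact ((auxReachOfMem (mem_specB0_ch1 G v0 v1 v2 hch) (fun hh => hv1 hh.symm)).symm).trans r01
    · have hch : chP2 G v0 v1 v2 a := ⟨hadj, h0, h1, h⟩
      exact ((auxReachOfMem (mem_specB0_ch2 G v0 v1 v2 hch) (fun hh => hv2 hh.symm)).symm).trans r02

lemma specB0_connected (hG : IsTriconed G v0 v1 v2) :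
    (SimpleGraph.fromEdgeSet (specB0 G v0 v1 v2)).Connected := by
  rw [SimpleGraph.connected_iff]
  refine ⟨fun a b => ?_, ⟨v0⟩⟩
  exact (specB0_reach_v0 G v0 v1 v2 hG a).trans (specB0_reach_v0 G v0 v1 v2 hG b).symm

lemma specB0_acyclic (hG : IsTriconed G v0 v1 v2) :
    (SimpleGraph.fromEdgeSet (specB0 G v0 v1 v2)).IsAcyclic := by
  rw [SimpleGraph.isAcyclic_iff_forall_edge_isBridge]
  intro e he
  rw [SimpleGraph.edgeSet_fromEdgeSet] at he
  induction e using Sym2.ind with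
  | _ a b =>
  obtain ⟨hmem, hdiag⟩ := he
  have hne : a ≠ b := fun h => hdiag (by simp [h])
  rw [SimpleGraph.isBridge_iff]
  unfold SimpleGraph.deleteEdges
  rw [auxFesSdiff]
  rcases specB0_cases G v0 v1 v2 hmem with ⟨h₁, hadj⟩ | ⟨h₁, hadj⟩ | ⟨h₁, hch⟩ |
    ⟨h₁, hch⟩ | ⟨h₁, hch⟩ | ⟨h₁, hch⟩
  · rw [h₁]; exact fun hr => auxNR1 G v0 v1 v2 hG hadj hr.symm
  · rw [h₁]; intro hr
    exact auxNR1 G v0 v1 v2 hG hadj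
      (by rwa [show s(a, v0) = s(v0, a) from Sym2.eq_swap] at hr)
  · rw [h₁]; intro hr
    have h2 : v1 = b := auxNR2 G v0 v1 v2 hG hch hr.symm
    rw [h₁] at hne; exact hne h2
  · rw [h₁]; intro hr
    rw [show s(a, v1) = s(v1, a) from Sym2.eq_swap] at hr
    have h2 : v1 = a := auxNR2 G v0 v1 v2 hG hch hr
    rw [h₁] at hne; exact hne h2.symm
  · rw [h₁]; intro hr
    have h2 : v2 = b := auxNR3 G v0 v1 v2 hG hch hr.symm
    rw [h₁] at hne; exact hne h2
  · rw [h₁]; intro hr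
    rw [show s(a, v2) = s(v2, a) from Sym2.eq_swap] at hr
    have h2 : v2 = a := auxNR3 G v0 v1 v2 hG hch hr
    rw [h₁] at hne; exact hne h2.symm
  
lemma specB0_spanning (hG : IsTriconed G v0 v1 v2) :
    IsSpanningTree G (specB0 G v0 v1 v2) :=
  ⟨specB0_sub G v0 v1 v2,
   ⟨specB0_connected G v0 v1 v2 hG, specB0_acyclic G v0 v1 v2 hG⟩⟩

lemma blockStar {u : V} (h : G.Adj v0 u) : edgeBlock G v0 v1 v2 s(v0, u) = 0 := by
  unfold edgeBlock
  rw [if_pos (Sym2.mem_mk_left v0 u)]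

lemma blockCh1 (hG : IsTriconed G v0 v1 v2) {u : V} (h : chP1 G v0 v1 u) :
    edgeBlock G v0 v1 v2 s(v1, u) = 1 := by
  obtain ⟨hconn, hn01, hn02, hn12, ha1, ha2, htri⟩ := hG
  unfold edgeBlock
  rw [if_neg, if_pos ⟨u, rfl, h.1⟩]
  intro hmem
  rcases Sym2.mem_iff.1 hmem with h' | h'
  · exact hn01 h'
  · exact h.2.1 h'.symm

lemma blockCh2 (hG : IsTriconed G v0 v1 v2) {u : V} (h : chP2 G v0 v1 v2 u) :
    edgeBlock G v0 v1 v2 s(v2, u) = 2 := by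
  obtain ⟨hconn, hn01, hn02, hn12, ha1, ha2, htri⟩ := hG
  unfold edgeBlock
  have hA : ¬ v0 ∈ s(v2, u) := by
    intro hmem
    rcases Sym2.mem_iff.1 hmem with h' | h'
    · exact hn02 h'
    · exact h.2.1 h'.symm
  have hB : ¬ ∃ x, s(v2, u) = s(v1, x) ∧ ¬G.Adj v0 x := by
    rintro ⟨x, hx, hnadj⟩
    rcases Sym2.eq_iff.1 hx with ⟨h1, h2⟩ | ⟨h1, h2⟩
    · exact hn12 h1.symm
    · rw [← h1] at hnadj; exact hnadj ha2
  rw [if_neg hA, if_neg hB, if_pos ⟨u, rfl, h.1, h.2.2.1⟩]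

lemma exchange_core (hG : IsTriconed G v0 v1 v2) (heo : EdgeOrderSpec G v0 v1 v2)
    {T : Set (Sym2 V)} (hT : IsSpanningTree G T) {x y : V}
    (het : s(x, y) ∈ T) (hes : s(x, y) ∉ specB0 G v0 v1 v2)
    (hmin : ∀ f, ((f ∈ specB0 G v0 v1 v2 ∧ f ∉ T) ∨ (f ∈ T ∧ f ∉ specB0 G v0 v1 v2)) →
      s(x, y) ≤ f) : False := by
  obtain ⟨hconn, hn01, hn02, hn12, ha1, ha2, htri⟩ := hG
  have heG : s(x, y) ∈ G.edgeSet := hT.1 het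
  have hadjxy : G.Adj x y := (SimpleGraph.mem_edgeSet G).1 heG
  have hnexy : x ≠ y := hadjxy.ne
  have hx0 : x ≠ v0 := by
    intro h; exact hes (by rw [h]; exact mem_specB0_star G v0 v1 v2 (by rw [← h]; exact hadjxy))
  have hy0 : y ≠ v0 := by
    intro h
    apply hes
    rw [show s(x, y) = s(y, x) from Sym2.eq_swap, h]
    exact mem_specB0_star G v0 v1 v2 (by rw [← h]; exact hadjxy.symm)
  have hblock : edgeBlock G v0 v1 v2 s(x, y) = 3 := by
    have hA : ¬ v0 ∈ s(x, y) := by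
      intro hmem
      rcases Sym2.mem_iff.1 hmem with h' | h'
      · exact hx0 h'.symm
      · exact hy0 h'.symm
    have hB : ¬ ∃ x', s(x, y) = s(v1, x') ∧ ¬G.Adj v0 x' := by
      rintro ⟨x', hx', hn1⟩
      apply hes
      rw [hx']
      apply mem_specB0_ch1 G v0 v1 v2
      refine ⟨hn1, ?_, (SimpleGraph.mem_edgeSet G).1 (by rw [← hx']; exact heG)⟩
      intro h'
      rcases Sym2.eq_iff.1 hx' with ⟨h1, h2⟩ | ⟨h1, h2⟩
      · exact hy0 (h2.trans h')
      · exact hx0 (h1.trans h')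
    have hC : ¬ ∃ x', s(x, y) = s(v2, x') ∧ ¬G.Adj v0 x' ∧ ¬G.Adj v1 x' := by
      rintro ⟨x', hx', hn1, hn2⟩
      apply hes
      rw [hx']
      apply mem_specB0_ch2 G v0 v1 v2
      refine ⟨hn1, ?_, hn2, (SimpleGraph.mem_edgeSet G).1 (by rw [← hx']; exact heG)⟩
      intro h'
      rcases Sym2.eq_iff.1 hx' with ⟨h1, h2⟩ | ⟨h1, h2⟩
      · exact hy0 (h2.trans h')
      · exact hx0 (h1.trans h')
    unfold edgeBlock
    rw [if_neg hA, if_neg hB, if_neg hC]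
  have hgood : ∀ g ∈ specB0 G v0 v1 v2, g ∉ T → False := by
    intro g hgs hgt
    have hgG : g ∈ G.edgeSet := specB0_sub G v0 v1 v2 hgs
    have hgb : edgeBlock G v0 v1 v2 g ≤ 2 := by
      rcases hgs with ⟨u, rfl, h⟩ | ⟨u, rfl, h⟩ | ⟨u, rfl, h⟩
      · rw [blockStar G v0 v1 v2 h]; omega
      · rw [blockCh1 G v0 v1 v2 ⟨hconn, hn01, hn02, hn12, ha1, ha2, htri⟩ h]; omega
      · exact le_of_eq (blockCh2 G v0 v1 v2 ⟨hconn, hn01, hn02, hn12, ha1, ha2, htri⟩ h)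
    have hlt : g < s(x, y) := by
      apply heo.1 g hgG s(x, y) heG
      rw [hblock]; omega
    exact absurd hlt (not_lt.mpr (hmin g (Or.inl ⟨hgs, hgt⟩)))
  have hmemT : ∀ g ∈ specB0 G v0 v1 v2, g ∈ T := by
    intro g hgs; by_contra h; exact hgood g hgs h
  have hneT : ∀ g ∈ specB0 G v0 v1 v2, g ≠ s(x, y) := fun g hgs h => hes (h ▸ hgs)
  have hclaim : ∀ u : V, u ≠ v0 →
      (SimpleGraph.fromEdgeSet (T \ {s(x, y)})).Reachable u v0 := by
    intro u hu0
    by_cases hadj : G.Adj v0 u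
    · have hmem := mem_specB0_star G v0 v1 v2 hadj
      exact (auxReachOfMem (F := T \ {s(x, y)})
        ⟨hmemT _ hmem, hneT _ hmem⟩ (fun h => hu0 h.symm)).symm
    · have hv1 : u ≠ v1 := fun h => hadj (h ▸ ha1)
      have hv2 : u ≠ v2 := fun h => hadj (h ▸ ha2)
      have hm01 := mem_specB0_star G v0 v1 v2 ha1
      have hm02 := mem_specB0_star G v0 v1 v2 ha2
      have r01 : (SimpleGraph.fromEdgeSet (T \ {s(x, y)})).Reachable v1 v0 :=
        (auxReachOfMem (F := T \ {s(x, y)}) ⟨hmemT _ hm01, hneT _ hm01⟩ hn01).symm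
      have r02 : (SimpleGraph.fromEdgeSet (T \ {s(x, y)})).Reachable v2 v0 :=
        (auxReachOfMem (F := T \ {s(x, y)}) ⟨hmemT _ hm02, hneT _ hm02⟩ hn02).symm
      rcases htri u hu0 hv1 hv2 with h | h | h
      · exact absurd h hadj
      · have hch : chP1 G v0 v1 u := ⟨hadj, hu0, h⟩
        have hm := mem_specB0_ch1 G v0 v1 v2 hch
        exact ((auxReachOfMem (F := T \ {s(x, y)}) ⟨hmemT _ hm, hneT _ hm⟩
          (fun hh => hv1 hh.symm)).symm).trans r01
      · by_cases h1 : G.Adj v1 u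
        · have hch : chP1 G v0 v1 u := ⟨hadj, hu0, h1⟩
          have hm := mem_specB0_ch1 G v0 v1 v2 hch
          exact ((auxReachOfMem (F := T \ {s(x, y)}) ⟨hmemT _ hm, hneT _ hm⟩
            (fun hh => hv1 hh.symm)).symm).trans r01
        · have hch : chP2 G v0 v1 v2 u := ⟨hadj, hu0, h1, h⟩
          have hm := mem_specB0_ch2 G v0 v1 v2 hch
          exact ((auxReachOfMem (F := T \ {s(x, y)}) ⟨hmemT _ hm, hneT _ hm⟩
            (fun hh => hv2 hh.symm)).symm).trans r02
  have hreach : (SimpleGraph.fromEdgeSet (T \ {s(x, y)})).Reachable x y :=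
    (hclaim x hx0).trans (hclaim y hy0).symm
  exact auxTreeBridge hT.2 het hnexy hreach

lemma exchange (hG : IsTriconed G v0 v1 v2) (heo : EdgeOrderSpec G v0 v1 v2)
    {T : Set (Sym2 V)} (hT : IsSpanningTree G T) (hne : T ≠ specB0 G v0 v1 v2) :
    EdgeSetLexLt (specB0 G v0 v1 v2) T := by
  have hΔne : {f : Sym2 V | (f ∈ specB0 G v0 v1 v2 ∧ f ∉ T) ∨
      (f ∈ T ∧ f ∉ specB0 G v0 v1 v2)}.Nonempty := by
    by_contra h
    rw [Set.not_nonempty_iff_eq_empty] at h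
    apply hne
    ext f
    have hf : f ∉ {f : Sym2 V | (f ∈ specB0 G v0 v1 v2 ∧ f ∉ T) ∨
        (f ∈ T ∧ f ∉ specB0 G v0 v1 v2)} := by rw [h]; exact Set.notMem_empty f
    simp only [Set.mem_setOf_eq] at hf
    push_neg at hf
    exact ⟨hf.2, hf.1⟩
  obtain ⟨e, heΔ, hmin⟩ := Set.exists_min_image _ id (Set.toFinite _) hΔne
  simp only [Set.mem_setOf_eq] at heΔ
  rcases heΔ with ⟨hes, het⟩ | ⟨het, hes⟩
  · exact ⟨e, hes, het, fun f hf hfe =>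
      lt_of_le_of_ne (hmin f hf) (Ne.symm hfe)⟩
  · exfalso
    obtain ⟨⟨px, py⟩, rfl⟩ := Quot.exists_rep e
    exact exchange_core G v0 v1 v2 hG heo hT het hes (fun f hf => hmin f hf)

lemma B0_eq_spec (hG : IsTriconed G v0 v1 v2) (heo : EdgeOrderSpec G v0 v1 v2)
    (hB0 : IsMinSpanningTree G B0) : B0 = specB0 G v0 v1 v2 := by
  by_contra hne
  have h1 := hB0.2 _ (specB0_spanning G v0 v1 v2 hG) (fun h => hne h.symm)
  have h2 := exchange G v0 v1 v2 hG heo hB0.1 hne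
  obtain ⟨e, he1, he2, hm1⟩ := h1
  obtain ⟨f, hf1, hf2, hm2⟩ := h2
  have hef : e ≠ f := fun h => he2 (h ▸ hf1)
  have l1 : e < f := hm1 f (Or.inr ⟨hf1, hf2⟩) hef.symm
  have l2 : f < e := hm2 e (Or.inr ⟨he1, he2⟩) hef
  exact absurd l1 (not_lt.mpr l2.le)

variable {G} {v0 v1 v2} {B0}
variable {B E : Set (Sym2 V)} {m : V → ℕ}

open SimpleGraph in
lemma auxGetVertMemSupport {G' : SimpleGraph V} {a b : V} (p : G'.Walk a b) (i : ℕ) :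
    p.getVert i ∈ p.support := by
  induction p generalizing i with
  | nil => simp [SimpleGraph.Walk.getVert]
  | cons h q ih =>
    cases i with
    | zero => simp
    | succ j =>
      rw [SimpleGraph.Walk.getVert_cons_succ, SimpleGraph.Walk.support_cons]
      exact List.mem_cons_of_mem _ (ih j)

open SimpleGraph in
lemma auxGetVertStart {G' : SimpleGraph V} {a b : V} {p : G'.Walk a b} (hp : p.IsPath)
    {i : ℕ} (hi : i ≠ 0) (hil : i ≤ p.length) (heq : p.getVert i = a) : False := by
  cases p with
  | nil => rw [SimpleGraph.Walk.length_nil] at hil; omega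
  | cons h q =>
    obtain ⟨j, rfl⟩ : ∃ j, i = j + 1 := ⟨i - 1, by omega⟩
    rw [SimpleGraph.Walk.getVert_cons_succ] at heq
    have hmem := auxGetVertMemSupport q j
    rw [heq] at hmem
    exact ((SimpleGraph.Walk.cons_isPath_iff h q).1 hp).2 hmem

open SimpleGraph in
lemma auxEdgesGet {G' : SimpleGraph V} {a b : V} (p : G'.Walk a b) (i : ℕ)
    (h : i < p.length) : p.edges[i]? = some s(p.getVert i, p.getVert (i + 1)) := by
  induction p generalizing i with
  | nil => simp at h
  | cons hadj q ih =>
    cases i with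
    | zero =>
      rw [SimpleGraph.Walk.edges_cons]
      simp [SimpleGraph.Walk.getVert_zero, SimpleGraph.Walk.getVert_cons_succ]
    | succ j =>
      rw [SimpleGraph.Walk.edges_cons]
      rw [SimpleGraph.Walk.length_cons] at h
      simp only [List.getElem?_cons_succ, SimpleGraph.Walk.getVert_cons_succ]
      exact ih j (by omega)

open SimpleGraph in
lemma auxEdgesGetLt {G' : SimpleGraph V} {a b : V} {p : G'.Walk a b} {i : ℕ} {e : Sym2 V}
    (h : p.edges[i]? = some e) : i < p.length := by
  obtain ⟨hlt, -⟩ := List.getElem?_eq_some_iff.1 h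
  rwa [SimpleGraph.Walk.length_edges] at hlt

open SimpleGraph in
lemma auxEdgesMem {G' : SimpleGraph V} {a b : V} {p : G'.Walk a b} {i : ℕ} {e : Sym2 V}
    (h : p.edges[i]? = some e) : e ∈ p.edges := by
  obtain ⟨hlt, he⟩ := List.getElem?_eq_some_iff.1 h
  exact he ▸ List.getElem_mem hlt

lemma E_eq_diff (hG : IsTriconed G v0 v1 v2) (hsp : B0 = specB0 G v0 v1 v2)
    (hB : IsSpanningTree G B) (hphi : IsPhi1 G v0 v1 v2 B0 B E m) : E = B \ B0 := by
  rw [hphi.1]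
  ext e
  constructor
  · rintro ⟨heB, -, henB0, -⟩
    exact ⟨heB, henB0⟩
  · rintro ⟨heB, henB0⟩
    refine ⟨heB, hB.1 heB, henB0, ?_⟩
    intro hv0
    obtain ⟨z, rfl⟩ := Sym2.mem_iff_exists.1 hv0
    apply henB0
    rw [hsp]
    exact mem_specB0_star G v0 v1 v2 ((SimpleGraph.mem_edgeSet G).1 (hB.1 heB))

lemma E_sub_B (hE : E = B \ B0) : E ⊆ B := by rw [hE]; exact Set.diff_subset

lemma E_not_B0 (hE : E = B \ B0) {e : Sym2 V} (he : e ∈ E) : e ∉ B0 := by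
  rw [hE] at he; exact he.2

lemma B0_not_E (hE : E = B \ B0) {e : Sym2 V} (he : e ∈ B0) : e ∉ E := by
  rw [hE]; exact fun h => h.2 he

lemma mem_E_or_B0 (hE : E = B \ B0) {e : Sym2 V} (he : e ∈ B) : e ∈ E ∨ e ∈ B0 := by
  by_cases h : e ∈ B0
  · exact Or.inr h
  · exact Or.inl (by rw [hE]; exact ⟨he, h⟩)

lemma E_sub_B_minus (hE : E = B \ B0) {g : Sym2 V} (hg : g ∈ B0) : E ⊆ B \ {g} :=
  fun e he => ⟨E_sub_B hE he, fun h => (E_not_B0 hE he) (h ▸ hg)⟩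

lemma no_chord (hB : IsSpanningTree G B) (hE : E = B \ B0) {a b : V}
    (haB : s(a, b) ∈ B) (haB0 : s(a, b) ∈ B0) (hne : a ≠ b)
    (hr : (SimpleGraph.fromEdgeSet E).Reachable a b) : False :=
  auxTreeBridge hB.2 haB hne (auxReachMono (E_sub_B_minus hE haB0) hr)

lemma v0_isolated (hG : IsTriconed G v0 v1 v2) (hsp : B0 = specB0 G v0 v1 v2)
    (hB : IsSpanningTree G B) (hE : E = B \ B0) {x : V}
    (h : (SimpleGraph.fromEdgeSet E).Reachable v0 x) : x = v0 := by
  have hcl : ∀ a b : V, s(a, b) ∈ E → a ∈ ({v0} : Set V) → b ∈ ({v0} : Set V) := by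
    intro a b hab ha
    rw [Set.mem_singleton_iff] at ha
    exfalso
    apply E_not_B0 hE hab
    rw [hsp, ha]
    exact mem_specB0_star G v0 v1 v2
      ((SimpleGraph.mem_edgeSet G).1 (hB.1 (by rw [← ha]; exact E_sub_B hE hab)))
  exact auxReachClosed hcl h rfl

lemma m_v0_eq (hphi : IsPhi1 G v0 v1 v2 B0 B E m) (hG : IsTriconed G v0 v1 v2) :
    m v0 = 0 := by
  by_contra h
  have h1 : 1 ≤ m v0 := by omega
  rcases (hphi.2.2.1 v0).1 h1 with h' | h' | ⟨p, hch, -⟩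
  · exact hG.2.1 h'
  · exact hG.2.2.1 h'
  · exact hch.2 (SimpleGraph.Reachable.refl v0)

lemma childOf_cases (hG : IsTriconed G v0 v1 v2) (hsp : B0 = specB0 G v0 v1 v2)
    {u p : V} (h : IsChildOf B0 v0 u p) :
    (p = v0 ∧ G.Adj v0 u) ∨ (p = v1 ∧ chP1 G v0 v1 u) ∨ (p = v2 ∧ chP2 G v0 v1 v2 u) := by
  obtain ⟨hconn, hn01, hn02, hn12, ha1, ha2, htri⟩ := hG
  obtain ⟨hmem, hnr⟩ := h
  have hmem' := hmem
  rw [hsp] at hmem'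
  rcases specB0_cases G v0 v1 v2 hmem' with ⟨h₁, hadj⟩ | ⟨h₁, hadj⟩ | ⟨h₁, hch⟩ |
    ⟨h₁, hch⟩ | ⟨h₁, hch⟩ | ⟨h₁, hch⟩
  · exfalso; apply hnr; rw [h₁]
  · exact Or.inl ⟨h₁, hadj⟩
  · exfalso
    apply hnr
    rw [h₁]
    have hne : s(v0, v1) ≠ s(v1, p) := by
      intro hh
      rcases Sym2.eq_iff.1 hh with ⟨g1, g2⟩ | ⟨g1, g2⟩
      · exact hn01 g1
      · exact hch.2.1 g1.symm
    refine (auxReachOfMem (F := B0 \ {s(v1, p)}) ⟨?_, hne⟩ hn01).symm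
    rw [hsp]; exact mem_specB0_star G v0 v1 v2 ha1
  · exact Or.inr (Or.inl ⟨h₁, hch⟩)
  · exfalso
    apply hnr
    rw [h₁]
    have hne : s(v0, v2) ≠ s(v2, p) := by
      intro hh
      rcases Sym2.eq_iff.1 hh with ⟨g1, g2⟩ | ⟨g1, g2⟩
      · exact hn02 g1
      · exact hch.2.1 g1.symm
    refine (auxReachOfMem (F := B0 \ {s(v2, p)}) ⟨?_, hne⟩ hn02).symm
    rw [hsp]; exact mem_specB0_star G v0 v1 v2 ha2
  · exact Or.inr (Or.inr ⟨h₁, hch⟩)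

lemma childOf_v0 (hG : IsTriconed G v0 v1 v2) (hsp : B0 = specB0 G v0 v1 v2)
    {u : V} (hadj : G.Adj v0 u) : IsChildOf B0 v0 u v0 := by
  constructor
  · rw [show s(u, v0) = s(v0, u) from Sym2.eq_swap, hsp]
    exact mem_specB0_star G v0 v1 v2 hadj
  · rw [hsp, show s(u, v0) = s(v0, u) from Sym2.eq_swap]
    exact fun hr => auxNR1 G v0 v1 v2 hG hadj hr

lemma childOf_v1 (hG : IsTriconed G v0 v1 v2) (hsp : B0 = specB0 G v0 v1 v2)
    {u : V} (hch : chP1 G v0 v1 u) : IsChildOf B0 v0 u v1 := by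
  constructor
  · rw [show s(u, v1) = s(v1, u) from Sym2.eq_swap, hsp]
    exact mem_specB0_ch1 G v0 v1 v2 hch
  · rw [hsp, show s(u, v1) = s(v1, u) from Sym2.eq_swap]
    exact fun hr => hch.2.1 (auxNR2 G v0 v1 v2 hG hch hr).symm

lemma childOf_v2 (hG : IsTriconed G v0 v1 v2) (hsp : B0 = specB0 G v0 v1 v2)
    {u : V} (hch : chP2 G v0 v1 v2 u) : IsChildOf B0 v0 u v2 := by
  constructor
  · rw [show s(u, v2) = s(v2, u) from Sym2.eq_swap, hsp]
    exact mem_specB0_ch2 G v0 v1 v2 hch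
  · rw [hsp, show s(u, v2) = s(v2, u) from Sym2.eq_swap]
    exact fun hr => hch.2.1 (auxNR3 G v0 v1 v2 hG hch hr).symm

lemma vType_v1 (hG : IsTriconed G v0 v1 v2) : vType B0 v0 v1 v2 v1 = 1 := by
  unfold vType
  rw [if_pos (Or.inl rfl)]

lemma vType_v2 (hG : IsTriconed G v0 v1 v2) (hsp : B0 = specB0 G v0 v1 v2) :
    vType B0 v0 v1 v2 v2 = 2 := by
  unfold vType
  rw [if_neg, if_pos (Or.inl rfl)]
  rintro (h | h)
  · exact hG.2.2.2.1 h.symm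
  · rcases childOf_cases hG hsp h with ⟨h₁, h₂⟩ | ⟨h₁, h₂⟩ | ⟨h₁, h₂⟩
    · exact hG.2.1 h₁.symm
    · exact h₂.1 hG.2.2.2.2.2.1
    · exact hG.2.2.2.1 h₁

lemma vType_chP1 (hG : IsTriconed G v0 v1 v2) (hsp : B0 = specB0 G v0 v1 v2)
    {u : V} (hch : chP1 G v0 v1 u) : vType B0 v0 v1 v2 u = 1 := by
  unfold vType
  rw [if_pos (Or.inr (childOf_v1 hG hsp hch))]

lemma vType_chP2 (hG : IsTriconed G v0 v1 v2) (hsp : B0 = specB0 G v0 v1 v2)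
    {u : V} (hch : chP2 G v0 v1 v2 u) : vType B0 v0 v1 v2 u = 2 := by
  unfold vType
  have hn1 : ¬(u = v1 ∨ IsChildOf B0 v0 u v1) := by
    rintro (h | h)
    · rw [h] at hch; exact hch.1 hG.2.2.2.2.1
    · rcases childOf_cases hG hsp h with ⟨h₁, h₂⟩ | ⟨h₁, h₂⟩ | ⟨h₁, h₂⟩
      · exact hG.2.1 h₁.symm
      · exact hch.2.2.1 h₂.2.2
      · exact hG.2.2.2.1 h₁
  rw [if_neg hn1, if_pos (Or.inr (childOf_v2 hG hsp hch))]

lemma vType_N0 (hG : IsTriconed G v0 v1 v2) (hsp : B0 = specB0 G v0 v1 v2)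
    {u : V} (hadj : G.Adj v0 u) (h1 : u ≠ v1) (h2 : u ≠ v2) : vType B0 v0 v1 v2 u = 0 := by
  unfold vType
  have hn1 : ¬(u = v1 ∨ IsChildOf B0 v0 u v1) := by
    rintro (h | h)
    · exact h1 h
    · rcases childOf_cases hG hsp h with ⟨h₁, h₂⟩ | ⟨h₁, h₂⟩ | ⟨h₁, h₂⟩
      · exact hG.2.1 h₁.symm
      · exact h₂.1 hadj
      · exact hG.2.2.2.1 h₁
  have hn2 : ¬(u = v2 ∨ IsChildOf B0 v0 u v2) := by
    rintro (h | h)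
    · exact h2 h
    · rcases childOf_cases hG hsp h with ⟨h₁, h₂⟩ | ⟨h₁, h₂⟩ | ⟨h₁, h₂⟩
      · exact hG.2.2.1 h₁.symm
      · exact hG.2.2.2.1 h₁.symm
      · exact h₂.1 hadj
  rw [if_neg hn1, if_neg hn2]

lemma vType_cases (u : V) :
    vType B0 v0 v1 v2 u = 0 ∨ vType B0 v0 v1 v2 u = 1 ∨ vType B0 v0 v1 v2 u = 2 := by
  unfold vType
  split_ifs <;> simp

lemma mark_v1 (hphi : IsPhi1 G v0 v1 v2 B0 B E m) : 1 ≤ m v1 :=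
  (hphi.2.2.1 v1).2 (Or.inl rfl)

lemma mark_v2 (hphi : IsPhi1 G v0 v1 v2 B0 B E m) : 1 ≤ m v2 :=
  (hphi.2.2.1 v2).2 (Or.inr (Or.inl rfl))

lemma mark_of_N0 (hG : IsTriconed G v0 v1 v2) (hsp : B0 = specB0 G v0 v1 v2)
    (hphi : IsPhi1 G v0 v1 v2 B0 B E m) {u : V} (hadj : G.Adj v0 u)
    (hmem : s(u, v0) ∈ B) : 1 ≤ m u :=
  (hphi.2.2.1 u).2 (Or.inr (Or.inr ⟨v0, childOf_v0 hG hsp hadj, hmem⟩))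

lemma mark_of_ch1 (hG : IsTriconed G v0 v1 v2) (hsp : B0 = specB0 G v0 v1 v2)
    (hphi : IsPhi1 G v0 v1 v2 B0 B E m) {u : V} (hch : chP1 G v0 v1 u)
    (hmem : s(u, v1) ∈ B) : 1 ≤ m u :=
  (hphi.2.2.1 u).2 (Or.inr (Or.inr ⟨v1, childOf_v1 hG hsp hch, hmem⟩))

lemma mark_of_ch2 (hG : IsTriconed G v0 v1 v2) (hsp : B0 = specB0 G v0 v1 v2)
    (hphi : IsPhi1 G v0 v1 v2 B0 B E m) {u : V} (hch : chP2 G v0 v1 v2 u)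
    (hmem : s(u, v2) ∈ B) : 1 ≤ m u :=
  (hphi.2.2.1 u).2 (Or.inr (Or.inr ⟨v2, childOf_v2 hG hsp hch, hmem⟩))

lemma mark0_char (hG : IsTriconed G v0 v1 v2) (hsp : B0 = specB0 G v0 v1 v2)
    (hphi : IsPhi1 G v0 v1 v2 B0 B E m) {u : V} (hm : 1 ≤ m u)
    (ht : vType B0 v0 v1 v2 u = 0) :
    G.Adj v0 u ∧ u ≠ v1 ∧ u ≠ v2 ∧ s(u, v0) ∈ B := by
  have hne1 : u ≠ v1 := fun h => by rw [h, vType_v1 hG] at ht; omega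
  have hne2 : u ≠ v2 := fun h => by rw [h, vType_v2 hG hsp] at ht; omega
  rcases (hphi.2.2.1 u).1 hm with h | h | ⟨p, hch, hmem⟩
  · exact absurd h hne1
  · exact absurd h hne2
  · rcases childOf_cases hG hsp hch with ⟨h₁, h₂⟩ | ⟨h₁, h₂⟩ | ⟨h₁, h₂⟩
    · exact ⟨h₂, hne1, hne2, by rw [← h₁]; exact hmem⟩
    · rw [vType_chP1 hG hsp h₂] at ht; omega
    · rw [vType_chP2 hG hsp h₂] at ht; omega

lemma mark1_char (hG : IsTriconed G v0 v1 v2) (hsp : B0 = specB0 G v0 v1 v2)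
    (hphi : IsPhi1 G v0 v1 v2 B0 B E m) {u : V} (hm : 1 ≤ m u)
    (ht : vType B0 v0 v1 v2 u = 1) :
    u = v1 ∨ (chP1 G v0 v1 u ∧ s(u, v1) ∈ B) := by
  by_cases hu1 : u = v1
  · exact Or.inl hu1
  have hne2 : u ≠ v2 := fun h => by rw [h, vType_v2 hG hsp] at ht; omega
  rcases (hphi.2.2.1 u).1 hm with h | h | ⟨p, hch, hmem⟩
  · exact absurd h hu1
  · exact absurd h hne2
  · rcases childOf_cases hG hsp hch with ⟨h₁, h₂⟩ | ⟨h₁, h₂⟩ | ⟨h₁, h₂⟩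
    · rw [vType_N0 hG hsp h₂ hu1 hne2] at ht; omega
    · exact Or.inr ⟨h₂, by rw [← h₁]; exact hmem⟩
    · rw [vType_chP2 hG hsp h₂] at ht; omega

lemma mark2_char (hG : IsTriconed G v0 v1 v2) (hsp : B0 = specB0 G v0 v1 v2)
    (hphi : IsPhi1 G v0 v1 v2 B0 B E m) {u : V} (hm : 1 ≤ m u)
    (ht : vType B0 v0 v1 v2 u = 2) :
    u = v2 ∨ (chP2 G v0 v1 v2 u ∧ s(u, v2) ∈ B) := by
  by_cases hu2 : u = v2
  · exact Or.inl hu2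
  have hne1 : u ≠ v1 := fun h => by rw [h, vType_v1 hG] at ht; omega
  rcases (hphi.2.2.1 u).1 hm with h | h | ⟨p, hch, hmem⟩
  · exact absurd h hne1
  · exact absurd h hu2
  · rcases childOf_cases hG hsp hch with ⟨h₁, h₂⟩ | ⟨h₁, h₂⟩ | ⟨h₁, h₂⟩
    · rw [vType_N0 hG hsp h₂ hne1 hu2] at ht; omega
    · rw [vType_chP1 hG hsp h₂] at ht; omega
    · exact Or.inr ⟨h₂, by rw [← h₁]; exact hmem⟩

lemma m2_char (hG : IsTriconed G v0 v1 v2) (hsp : B0 = specB0 G v0 v1 v2)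
    (hphi : IsPhi1 G v0 v1 v2 B0 B E m) {z : V} (hz : m z = 2) :
    s(v0, v2) ∈ B ∧ (z = v2 ∨ (chP2 G v0 v1 v2 z ∧ s(z, v2) ∈ B)) := by
  obtain ⟨hconn, hn01, hn02, hn12, ha1, ha2, htri⟩ := hG
  obtain ⟨h02, p, hp, h02e, i, hpre, ⟨e, hei, heB0⟩, hv⟩ := (hphi.2.2.2 z).1 hz
  refine ⟨h02, ?_⟩
  cases i with
  | zero => left; rw [hv, SimpleGraph.Walk.getVert_zero]
  | succ j =>
    have hlen : j + 1 < p.length := auxEdgesGetLt hei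
    have h0 : p.edges[0]? = some s(p.getVert 0, p.getVert 1) := auxEdgesGet p 0 (by omega)
    have h0B0 : s(p.getVert 0, p.getVert 1) ∈ B0 := hpre 0 (by omega) _ h0
    have h0B : s(p.getVert 0, p.getVert 1) ∈ B := by
      have hh := p.edges_subset_edgeSet (auxEdgesMem h0)
      rw [SimpleGraph.edgeSet_fromEdgeSet] at hh
      exact hh.1
    rw [SimpleGraph.Walk.getVert_zero] at h0B0 h0B
    have hw1 : chP2 G v0 v1 v2 (p.getVert 1) := by
      have hmem' := h0B0
      rw [hsp] at hmem'
      rcases specB0_cases G v0 v1 v2 hmem' with ⟨h₁, h₂⟩ | ⟨h₁, h₂⟩ | ⟨h₁, h₂⟩ |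
        ⟨h₁, h₂⟩ | ⟨h₁, h₂⟩ | ⟨h₁, h₂⟩
      · exact absurd h₁.symm hn02
      · exfalso
        apply h02e
        rw [show s(v0, v2) = s(v2, v0) from Sym2.eq_swap, ← h₁]
        have hmm := auxEdgesMem h0
        rwa [SimpleGraph.Walk.getVert_zero] at hmm
      · exact absurd h₁.symm hn12
      · exact absurd ha2 h₂.1
      · exact h₂
      · exact absurd ha2 h₂.1
    cases j with
    | zero =>
      right
      norm_num at hv
      rw [hv, show s(p.getVert 1, v2) = s(v2, p.getVert 1) from Sym2.eq_swap]
      exact ⟨hw1, h0B⟩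
    | succ k =>
      exfalso
      have h1e : p.edges[1]? = some s(p.getVert 1, p.getVert 2) := auxEdgesGet p 1 (by omega)
      have h1B0 : s(p.getVert 1, p.getVert 2) ∈ B0 := hpre 1 (by omega) _ h1e
      rw [hsp] at h1B0
      rcases specB0_cases G v0 v1 v2 h1B0 with ⟨h₁, h₂⟩ | ⟨h₁, h₂⟩ | ⟨h₁, h₂⟩ |
        ⟨h₁, h₂⟩ | ⟨h₁, h₂⟩ | ⟨h₁, h₂⟩
      · exact hw1.2.1 h₁
      · exact hw1.1 h₂
      · rw [h₁] at hw1; exact hw1.1 ha1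
      · exact hw1.2.2.1 h₂.2.2
      · rw [h₁] at hw1; exact hw1.1 ha2
      · exact auxGetVertStart hp (by omega) (by omega) h₁

lemma auxSumLeOne {f : V → ℕ} (hle : ∀ x, f x ≤ 1)
    (huniq : ∀ x y, 1 ≤ f x → 1 ≤ f y → x = y) : ∑ x : V, f x ≤ 1 := by
  by_cases hex : ∃ x, 1 ≤ f x
  · obtain ⟨x0, hx0⟩ := hex
    have hsum : ∑ x : V, f x = f x0 := by
      apply Finset.sum_eq_single x0
      · intro b _ hb
        by_contra hbne
        have h1 : 1 ≤ f b := by omega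
        exact hb (huniq b x0 h1 hx0)
      · intro h; exact absurd (Finset.mem_univ x0) h
    rw [hsum]; exact hle x0
  · push_neg at hex
    rw [Finset.sum_eq_zero (fun x _ => by have := hex x; omega)]
    omega

lemma mtc_congr {u x : V} (hux : (SimpleGraph.fromEdgeSet E).Reachable u x) (t : ℕ) :
    markTypeCount B0 v0 v1 v2 E m u t = markTypeCount B0 v0 v1 v2 E m x t := by
  unfold markTypeCount
  apply Finset.sum_congr rfl
  intro y _
  exact if_congr ⟨fun h => hux.symm.trans h, fun h => hux.trans h⟩ rfl rfl

lemma compMarks_congr {u x : V} (hux : (SimpleGraph.fromEdgeSet E).Reachable u x) :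
    compMarks E m u = compMarks E m x := by
  unfold compMarks
  apply Finset.sum_congr rfl
  intro y _
  exact if_congr ⟨fun h => hux.symm.trans h, fun h => hux.trans h⟩ rfl rfl

lemma mtc_lower {u x : V} {t : ℕ} (hux : (SimpleGraph.fromEdgeSet E).Reachable u x)
    (hm : 1 ≤ m x) (ht : vType B0 v0 v1 v2 x = t) :
    1 ≤ markTypeCount B0 v0 v1 v2 E m u t := by
  unfold markTypeCount
  have h1 : 1 ≤ (if (SimpleGraph.fromEdgeSet E).Reachable u x then
      ((if 1 ≤ m x ∧ vType B0 v0 v1 v2 x = t then 1 else 0) +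
        (if m x = 2 ∧ t = 0 then 1 else 0)) else 0) := by
    rw [if_pos hux, if_pos ⟨hm, ht⟩]; omega
  exact le_trans h1 (Finset.single_le_sum
    (f := fun y => if (SimpleGraph.fromEdgeSet E).Reachable u y then
      ((if 1 ≤ m y ∧ vType B0 v0 v1 v2 y = t then 1 else 0) +
        (if m y = 2 ∧ t = 0 then 1 else 0)) else 0)
    (fun i _ => Nat.zero_le _) (Finset.mem_univ x))

lemma mtc_lower2 {u z : V} (hux : (SimpleGraph.fromEdgeSet E).Reachable u z)
    (hm : m z = 2) : 1 ≤ markTypeCount B0 v0 v1 v2 E m u 0 := by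
  unfold markTypeCount
  have h1 : 1 ≤ (if (SimpleGraph.fromEdgeSet E).Reachable u z then
      ((if 1 ≤ m z ∧ vType B0 v0 v1 v2 z = 0 then 1 else 0) +
        (if m z = 2 ∧ (0 : ℕ) = 0 then 1 else 0)) else 0) := by
    rw [if_pos hux, if_pos (⟨hm, rfl⟩ : m z = 2 ∧ (0 : ℕ) = 0)]; omega
  exact le_trans h1 (Finset.single_le_sum
    (f := fun y => if (SimpleGraph.fromEdgeSet E).Reachable u y then
      ((if 1 ≤ m y ∧ vType B0 v0 v1 v2 y = 0 then 1 else 0) +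
        (if m y = 2 ∧ (0 : ℕ) = 0 then 1 else 0)) else 0)
    (fun i _ => Nat.zero_le _) (Finset.mem_univ z))

lemma mtc_extract {u : V} {t : ℕ} (h : 1 ≤ markTypeCount B0 v0 v1 v2 E m u t) :
    ∃ x, (SimpleGraph.fromEdgeSet E).Reachable u x ∧
      ((1 ≤ m x ∧ vType B0 v0 v1 v2 x = t) ∨ (m x = 2 ∧ t = 0)) := by
  by_contra hno
  have hz : markTypeCount B0 v0 v1 v2 E m u t = 0 := by
    unfold markTypeCount
    apply Finset.sum_eq_zero
    intro y _
    by_cases hr : (SimpleGraph.fromEdgeSet E).Reachable u y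
    · rw [if_pos hr, if_neg (fun hh => hno ⟨y, hr, Or.inl hh⟩),
        if_neg (fun hh => hno ⟨y, hr, Or.inr hh⟩)]
      omega
    · rw [if_neg hr]
  omega

lemma uniq0N (hB : IsSpanningTree G B) (hE : E = B \ B0) {x y : V}
    (hxB : s(x, v0) ∈ B) (hxB0 : s(x, v0) ∈ B0) (hx0 : x ≠ v0)
    (hyB : s(y, v0) ∈ B) (hy0 : y ≠ v0)
    (hr : (SimpleGraph.fromEdgeSet E).Reachable x y) (hne : x ≠ y) : False := by
  apply auxTreeBridge hB.2 hxB hx0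
  refine (auxReachMono (E_sub_B_minus hE hxB0) hr).trans
    (auxReachOfMem (F := B \ {s(x, v0)}) ⟨hyB, ?_⟩ hy0)
  intro hh
  rcases Sym2.eq_iff.1 hh with ⟨g1, g2⟩ | ⟨g1, g2⟩
  · exact hne (g1.symm)
  · exact hy0 g1

lemma uniq1' (hG : IsTriconed G v0 v1 v2) (hsp : B0 = specB0 G v0 v1 v2)
    (hB : IsSpanningTree G B) (hE : E = B \ B0) {x y : V}
    (hx : x = v1 ∨ (chP1 G v0 v1 x ∧ s(x, v1) ∈ B))
    (hy : y = v1 ∨ (chP1 G v0 v1 y ∧ s(y, v1) ∈ B))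
    (hr : (SimpleGraph.fromEdgeSet E).Reachable x y) (hne : x ≠ y) : False := by
  have hmem : ∀ z : V, chP1 G v0 v1 z → s(z, v1) ∈ B0 := fun z hz => by
    rw [show s(z, v1) = s(v1, z) from Sym2.eq_swap, hsp]
    exact mem_specB0_ch1 G v0 v1 v2 hz
  rcases hx with hx1 | ⟨hcx, hbx⟩
  · rcases hy with hy1 | ⟨hcy, hby⟩
    · exact hne (hx1.trans hy1.symm)
    · apply no_chord hB hE hby (hmem y hcy) hcy.2.2.ne'
      rw [← hx1]
      exact hr.symm
  · rcases hy with hy1 | ⟨hcy, hby⟩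
    · apply no_chord hB hE hbx (hmem x hcx) hcx.2.2.ne'
      rw [← hy1]
      exact hr
    · apply auxTreeBridge hB.2 hbx hcx.2.2.ne'
      refine (auxReachMono (E_sub_B_minus hE (hmem x hcx)) hr).trans
        (auxReachOfMem (F := B \ {s(x, v1)}) ⟨hby, ?_⟩ hcy.2.2.ne')
      intro hh
      rcases Sym2.eq_iff.1 hh with ⟨g1, g2⟩ | ⟨g1, g2⟩
      · exact hne g1.symm
      · exact hcy.2.2.ne' g1

lemma uniq2' (hG : IsTriconed G v0 v1 v2) (hsp : B0 = specB0 G v0 v1 v2)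
    (hB : IsSpanningTree G B) (hE : E = B \ B0) {x y : V}
    (hx : x = v2 ∨ (chP2 G v0 v1 v2 x ∧ s(x, v2) ∈ B))
    (hy : y = v2 ∨ (chP2 G v0 v1 v2 y ∧ s(y, v2) ∈ B))
    (hr : (SimpleGraph.fromEdgeSet E).Reachable x y) (hne : x ≠ y) : False := by
  have hmem : ∀ z : V, chP2 G v0 v1 v2 z → s(z, v2) ∈ B0 := fun z hz => by
    rw [show s(z, v2) = s(v2, z) from Sym2.eq_swap, hsp]
    exact mem_specB0_ch2 G v0 v1 v2 hz
  rcases hx with hx1 | ⟨hcx, hbx⟩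
  · rcases hy with hy1 | ⟨hcy, hby⟩
    · exact hne (hx1.trans hy1.symm)
    · apply no_chord hB hE hby (hmem y hcy) hcy.2.2.2.ne'
      rw [← hx1]
      exact hr.symm
  · rcases hy with hy1 | ⟨hcy, hby⟩
    · apply no_chord hB hE hbx (hmem x hcx) hcx.2.2.2.ne'
      rw [← hy1]
      exact hr
    · apply auxTreeBridge hB.2 hbx hcx.2.2.2.ne'
      refine (auxReachMono (E_sub_B_minus hE (hmem x hcx)) hr).trans
        (auxReachOfMem (F := B \ {s(x, v2)}) ⟨hby, ?_⟩ hcy.2.2.2.ne')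
      intro hh
      rcases Sym2.eq_iff.1 hh with ⟨g1, g2⟩ | ⟨g1, g2⟩
      · exact hne g1.symm
      · exact hcy.2.2.2.ne' g1

lemma uniq0X (hG : IsTriconed G v0 v1 v2) (hsp : B0 = specB0 G v0 v1 v2)
    (hB : IsSpanningTree G B) (hE : E = B \ B0)
    (hphi : IsPhi1 G v0 v1 v2 B0 B E m) {x y : V}
    (hadjx : G.Adj v0 x) (hx2 : x ≠ v2) (hxB : s(x, v0) ∈ B)
    (hy2 : m y = 2) (hr : (SimpleGraph.fromEdgeSet E).Reachable x y) : False := by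
  obtain ⟨h02, hyc⟩ := m2_char hG hsp hphi hy2
  have hx0 : x ≠ v0 := hadjx.ne'
  have hxB0 : s(x, v0) ∈ B0 := by
    rw [show s(x, v0) = s(v0, x) from Sym2.eq_swap, hsp]
    exact mem_specB0_star G v0 v1 v2 hadjx
  apply auxTreeBridge hB.2 hxB hx0
  have hstep1 : (SimpleGraph.fromEdgeSet (B \ {s(x, v0)})).Reachable x y :=
    auxReachMono (E_sub_B_minus hE hxB0) hr
  have h20 : (SimpleGraph.fromEdgeSet (B \ {s(x, v0)})).Reachable v2 v0 := by
    refine auxReachOfMem (F := B \ {s(x, v0)}) ⟨?_, ?_⟩ (fun h => hG.2.2.1 h.symm)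
    · rw [show s(v2, v0) = s(v0, v2) from Sym2.eq_swap]; exact h02
    · intro hh
      rcases Sym2.eq_iff.1 hh with ⟨g1, g2⟩ | ⟨g1, g2⟩
      · exact hx2 g1.symm
      · exact hG.2.2.1 g1.symm
  rcases hyc with hyv2 | ⟨hcy, hyB⟩
  · exact hstep1.trans (by rw [hyv2]; exact h20)
  · refine hstep1.trans ((auxReachOfMem (F := B \ {s(x, v0)})
      ⟨hyB, ?_⟩ hcy.2.2.2.ne').trans h20)
    intro hh
    rcases Sym2.eq_iff.1 hh with ⟨g1, g2⟩ | ⟨g1, g2⟩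
    · exact hG.2.2.1 g2.symm
    · exact hcy.2.1 g1

lemma mtc_le_one (hG : IsTriconed G v0 v1 v2) (hsp : B0 = specB0 G v0 v1 v2)
    (hB : IsSpanningTree G B) (hE : E = B \ B0)
    (hphi : IsPhi1 G v0 v1 v2 B0 B E m) (u : V) (t : ℕ) :
    markTypeCount B0 v0 v1 v2 E m u t ≤ 1 := by
  unfold markTypeCount
  apply auxSumLeOne
  · intro x
    by_cases hr : (SimpleGraph.fromEdgeSet E).Reachable u x
    · rw [if_pos hr]
      by_cases hA : 1 ≤ m x ∧ vType B0 v0 v1 v2 x = t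
      · rw [if_pos hA]
        have hBn : ¬(m x = 2 ∧ t = 0) := by
          rintro ⟨h2, ht0⟩
          have hvt := hA.2
          rw [ht0] at hvt
          rcases (m2_char hG hsp hphi h2).2 with h | h
          · rw [h, vType_v2 hG hsp] at hvt; omega
          · rw [vType_chP2 hG hsp h.1] at hvt; omega
        rw [if_neg hBn]
      · rw [if_neg hA]
        split_ifs <;> omega
    · rw [if_neg hr]; omega
  · intro x y hfx hfy
    have hcx : (SimpleGraph.fromEdgeSet E).Reachable u x ∧
        ((1 ≤ m x ∧ vType B0 v0 v1 v2 x = t) ∨ (m x = 2 ∧ t = 0)) := by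
      by_cases hr : (SimpleGraph.fromEdgeSet E).Reachable u x
      · refine ⟨hr, ?_⟩
        rw [if_pos hr] at hfx
        by_contra hno
        rw [if_neg (fun hh => hno (Or.inl hh)), if_neg (fun hh => hno (Or.inr hh))] at hfx
        omega
      · rw [if_neg hr] at hfx; omega
    have hcy : (SimpleGraph.fromEdgeSet E).Reachable u y ∧
        ((1 ≤ m y ∧ vType B0 v0 v1 v2 y = t) ∨ (m y = 2 ∧ t = 0)) := by
      by_cases hr : (SimpleGraph.fromEdgeSet E).Reachable u y
      · refine ⟨hr, ?_⟩
        rw [if_pos hr] at hfy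
        by_contra hno
        rw [if_neg (fun hh => hno (Or.inl hh)), if_neg (fun hh => hno (Or.inr hh))] at hfy
        omega
      · rw [if_neg hr] at hfy; omega
    obtain ⟨hrx, hmx⟩ := hcx
    obtain ⟨hry, hmy⟩ := hcy
    by_contra hne
    have hrxy : (SimpleGraph.fromEdgeSet E).Reachable x y := hrx.symm.trans hry
    rcases hmx with ⟨hm1x, htx⟩ | ⟨hm2x, ht0⟩
    · rcases hmy with ⟨hm1y, hty⟩ | ⟨hm2y, ht0⟩
      · -- both ordinary marks of type t
        rcases vType_cases (B0 := B0) (v0 := v0) (v1 := v1) (v2 := v2) x with h0 | h1 | h2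
        · rw [h0] at htx
          rw [← htx] at hty
          obtain ⟨hax, hx1, hx2, hbx⟩ := mark0_char hG hsp hphi hm1x h0
          obtain ⟨hay, hy1, hy2, hby⟩ := mark0_char hG hsp hphi hm1y hty
          exact uniq0N hB hE hbx (by
              rw [show s(x, v0) = s(v0, x) from Sym2.eq_swap, hsp]
              exact mem_specB0_star G v0 v1 v2 hax) hax.ne' hby hay.ne' hrxy hne
        · rw [h1] at htx
          rw [← htx] at hty
          exact uniq1' hG hsp hB hE (mark1_char hG hsp hphi hm1x h1)
            (mark1_char hG hsp hphi hm1y hty) hrxy hne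
        · rw [h2] at htx
          rw [← htx] at hty
          exact uniq2' hG hsp hB hE (mark2_char hG hsp hphi hm1x h2)
            (mark2_char hG hsp hphi hm1y hty) hrxy hne
      · -- x ordinary of type 0, y doubly marked
        rw [ht0] at htx
        obtain ⟨hax, hx1, hx2, hbx⟩ := mark0_char hG hsp hphi hm1x htx
        exact uniq0X hG hsp hB hE hphi hax hx2 hbx hm2y hrxy
    · rcases hmy with ⟨hm1y, hty⟩ | ⟨hm2y, -⟩
      · rw [ht0] at hty
        obtain ⟨hay, hy1, hy2, hby⟩ := mark0_char hG hsp hphi hm1y hty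
        exact uniq0X hG hsp hB hE hphi hay hy2 hby hm2x hrxy.symm
      · -- both doubly marked: both carry type 2 marks
        exact uniq2' hG hsp hB hE ((m2_char hG hsp hphi hm2x).2)
          ((m2_char hG hsp hphi hm2y).2) hrxy hne

lemma compMarks_split (hG : IsTriconed G v0 v1 v2) (hsp : B0 = specB0 G v0 v1 v2)
    (hphi : IsPhi1 G v0 v1 v2 B0 B E m) (u : V) :
    compMarks E m u = markTypeCount B0 v0 v1 v2 E m u 0 +
      markTypeCount B0 v0 v1 v2 E m u 1 + markTypeCount B0 v0 v1 v2 E m u 2 := by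
  unfold compMarks markTypeCount
  rw [← Finset.sum_add_distrib, ← Finset.sum_add_distrib]
  apply Finset.sum_congr rfl
  intro x _
  by_cases hr : (SimpleGraph.fromEdgeSet E).Reachable u x
  · simp only [if_pos hr]
    have hb := hphi.2.1 x
    rcases (by omega : m x = 0 ∨ m x = 1 ∨ m x = 2) with hmx | hmx | hmx
    · simp [hmx]
    · rcases vType_cases (B0 := B0) (v0 := v0) (v1 := v1) (v2 := v2) x with ht | ht | ht <;>
        simp [hmx, ht]
    · have ht : vType B0 v0 v1 v2 x = 2 := by
        rcases (m2_char hG hsp hphi hmx).2 with h | h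
        · rw [h]; exact vType_v2 hG hsp
        · exact vType_chP2 hG hsp h.1
      simp [hmx, ht]
  · simp only [if_neg hr]

lemma bp_of_witness {a b : ℕ} {u : V} (hu : u ≠ v0)
    (h : (compMarks E m u = 2 ∧ a ≠ b ∧ 1 ≤ markTypeCount B0 v0 v1 v2 E m u a ∧
          1 ≤ markTypeCount B0 v0 v1 v2 E m u b) ∨
        (compMarks E m u = 3 ∧ (({a, b} : Set ℕ) = {0, 1} ∨ ({a, b} : Set ℕ) = {0, 2}))) :
    1 ≤ bpMult B0 v0 v1 v2 E m a b := by
  have hne : {c : (SimpleGraph.fromEdgeSet E).ConnectedComponent |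
      ∃ u', u' ≠ v0 ∧ (SimpleGraph.fromEdgeSet E).connectedComponentMk u' = c ∧
        ((compMarks E m u' = 2 ∧ a ≠ b ∧ 1 ≤ markTypeCount B0 v0 v1 v2 E m u' a ∧
            1 ≤ markTypeCount B0 v0 v1 v2 E m u' b) ∨
          (compMarks E m u' = 3 ∧
            (({a, b} : Set ℕ) = {0, 1} ∨ ({a, b} : Set ℕ) = {0, 2})))}.Nonempty :=
    ⟨(SimpleGraph.fromEdgeSet E).connectedComponentMk u, u, hu, rfl, h⟩
  have hpos := (Set.ncard_pos (Set.toFinite _)).2 hne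
  unfold bpMult
  omega

lemma bp_extract {a b : ℕ} (h : 1 ≤ bpMult B0 v0 v1 v2 E m a b) :
    ∃ u, u ≠ v0 ∧
      ((compMarks E m u = 2 ∧ a ≠ b ∧ 1 ≤ markTypeCount B0 v0 v1 v2 E m u a ∧
          1 ≤ markTypeCount B0 v0 v1 v2 E m u b) ∨
        (compMarks E m u = 3 ∧ (({a, b} : Set ℕ) = {0, 1} ∨ ({a, b} : Set ℕ) = {0, 2}))) := by
  unfold bpMult at h
  obtain ⟨c, u, hu, -, hcond⟩ :=
    Set.nonempty_of_ncard_ne_zero (Nat.one_le_iff_ne_zero.mp h)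
  exact ⟨u, hu, hcond⟩

lemma bp01_of (hG : IsTriconed G v0 v1 v2) (hsp : B0 = specB0 G v0 v1 v2)
    (hB : IsSpanningTree G B) (hE : E = B \ B0) (hphi : IsPhi1 G v0 v1 v2 B0 B E m)
    {u : V} (hu : u ≠ v0) (h0 : 1 ≤ markTypeCount B0 v0 v1 v2 E m u 0)
    (h1 : 1 ≤ markTypeCount B0 v0 v1 v2 E m u 1) :
    1 ≤ bpMult B0 v0 v1 v2 E m 0 1 := by
  have hsplit := compMarks_split hG hsp hphi u
  have m0 := mtc_le_one hG hsp hB hE hphi u 0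
  have m1 := mtc_le_one hG hsp hB hE hphi u 1
  have m2 := mtc_le_one hG hsp hB hE hphi u 2
  rcases (by omega : compMarks E m u = 2 ∨ compMarks E m u = 3) with h | h
  · exact bp_of_witness hu (Or.inl ⟨h, by omega, h0, h1⟩)
  · exact bp_of_witness hu (Or.inr ⟨h, Or.inl rfl⟩)

lemma bp02_of (hG : IsTriconed G v0 v1 v2) (hsp : B0 = specB0 G v0 v1 v2)
    (hB : IsSpanningTree G B) (hE : E = B \ B0) (hphi : IsPhi1 G v0 v1 v2 B0 B E m)
    {u : V} (hu : u ≠ v0) (h0 : 1 ≤ markTypeCount B0 v0 v1 v2 E m u 0)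
    (h2 : 1 ≤ markTypeCount B0 v0 v1 v2 E m u 2) :
    1 ≤ bpMult B0 v0 v1 v2 E m 0 2 := by
  have hsplit := compMarks_split hG hsp hphi u
  have m0 := mtc_le_one hG hsp hB hE hphi u 0
  have m1 := mtc_le_one hG hsp hB hE hphi u 1
  have m2 := mtc_le_one hG hsp hB hE hphi u 2
  rcases (by omega : compMarks E m u = 2 ∨ compMarks E m u = 3) with h | h
  · exact bp_of_witness hu (Or.inl ⟨h, by omega, h0, h2⟩)
  · exact bp_of_witness hu (Or.inr ⟨h, Or.inr rfl⟩)

lemma bp21_of (hG : IsTriconed G v0 v1 v2) (hsp : B0 = specB0 G v0 v1 v2)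
    (hB : IsSpanningTree G B) (hE : E = B \ B0) (hphi : IsPhi1 G v0 v1 v2 B0 B E m)
    {u : V} (hu : u ≠ v0) (h2 : 1 ≤ markTypeCount B0 v0 v1 v2 E m u 2)
    (h1 : 1 ≤ markTypeCount B0 v0 v1 v2 E m u 1) :
    1 ≤ bpMult B0 v0 v1 v2 E m 2 1 ∨ 1 ≤ bpMult B0 v0 v1 v2 E m 0 1 := by
  have hsplit := compMarks_split hG hsp hphi u
  have m0 := mtc_le_one hG hsp hB hE hphi u 0
  have m1 := mtc_le_one hG hsp hB hE hphi u 1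
  have m2 := mtc_le_one hG hsp hB hE hphi u 2
  rcases (by omega : compMarks E m u = 2 ∨ compMarks E m u = 3) with h | h
  · exact Or.inl (bp_of_witness hu (Or.inl ⟨h, by omega, h2, h1⟩))
  · exact Or.inr (bp01_of hG hsp hB hE hphi hu (by omega) h1)

lemma m2_to_mark2 (hG : IsTriconed G v0 v1 v2) (hsp : B0 = specB0 G v0 v1 v2)
    (hphi : IsPhi1 G v0 v1 v2 B0 B E m) {x : V} (h : m x = 2) :
    1 ≤ m x ∧ vType B0 v0 v1 v2 x = 2 := by
  refine ⟨by omega, ?_⟩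
  rcases (m2_char hG hsp hphi h).2 with h' | h'
  · rw [h']; exact vType_v2 hG hsp
  · exact vType_chP2 hG hsp h'.1

lemma mtc_extract0 {u : V} (h : 1 ≤ markTypeCount B0 v0 v1 v2 E m u 0) :
    ∃ x, (SimpleGraph.fromEdgeSet E).Reachable u x ∧
      ((1 ≤ m x ∧ vType B0 v0 v1 v2 x = 0) ∨ m x = 2) := by
  obtain ⟨x, hr, hc⟩ := mtc_extract h
  exact ⟨x, hr, by rcases hc with h' | h'; exact Or.inl h'; exact Or.inr h'.1⟩

lemma mtc_extract1 {u : V} (h : 1 ≤ markTypeCount B0 v0 v1 v2 E m u 1) :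
    ∃ x, (SimpleGraph.fromEdgeSet E).Reachable u x ∧
      1 ≤ m x ∧ vType B0 v0 v1 v2 x = 1 := by
  obtain ⟨x, hr, hc⟩ := mtc_extract h
  refine ⟨x, hr, ?_⟩
  rcases hc with h' | h'
  · exact h'
  · exact absurd h'.2 (by omega)

lemma mtc_extract2 {u : V} (h : 1 ≤ markTypeCount B0 v0 v1 v2 E m u 2) :
    ∃ x, (SimpleGraph.fromEdgeSet E).Reachable u x ∧
      1 ≤ m x ∧ vType B0 v0 v1 v2 x = 2 := by
  obtain ⟨x, hr, hc⟩ := mtc_extract h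
  refine ⟨x, hr, ?_⟩
  rcases hc with h' | h'
  · exact h'
  · exact absurd h'.2 (by omega)

lemma h01B0 (hG : IsTriconed G v0 v1 v2) (hsp : B0 = specB0 G v0 v1 v2) :
    s(v0, v1) ∈ B0 := by
  rw [hsp]; exact mem_specB0_star G v0 v1 v2 hG.2.2.2.2.1

lemma R_v0_to_mark0 (hG : IsTriconed G v0 v1 v2) (hsp : B0 = specB0 G v0 v1 v2)
    (hB : IsSpanningTree G B) (hE : E = B \ B0) (hphi : IsPhi1 G v0 v1 v2 B0 B E m)
    {x0 : V} (hc0 : (1 ≤ m x0 ∧ vType B0 v0 v1 v2 x0 = 0) ∨ m x0 = 2) :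
    (SimpleGraph.fromEdgeSet (B \ {s(v0, v1)})).Reachable v0 x0 := by
  rcases hc0 with ⟨hm0, ht0⟩ | hm2
  · obtain ⟨hax, hne1, hne2, hbx⟩ := mark0_char hG hsp hphi hm0 ht0
    refine (auxReachOfMem (F := B \ {s(v0, v1)}) ⟨hbx, ?_⟩ hax.ne').symm
    intro hh
    rcases Sym2.eq_iff.1 hh with ⟨g1, g2⟩ | ⟨g1, g2⟩
    · exact hG.2.1 g2
    · exact hne1 g1
  · obtain ⟨h02, hcase⟩ := m2_char hG hsp hphi hm2
    have r2 : (SimpleGraph.fromEdgeSet (B \ {s(v0, v1)})).Reachable v0 v2 := by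
      refine auxReachOfMem (F := B \ {s(v0, v1)}) ⟨h02, ?_⟩ hG.2.2.1
      intro hh
      rcases Sym2.eq_iff.1 hh with ⟨g1, g2⟩ | ⟨g1, g2⟩
      · exact hG.2.2.2.1 g2.symm
      · exact hG.2.1 g1
    rcases hcase with h' | ⟨hch, hbx⟩
    · rw [h']; exact r2
    · refine r2.trans (auxReachOfMem (F := B \ {s(v0, v1)}) ⟨hbx, ?_⟩ hch.2.2.2.ne').symm
      intro hh
      rcases Sym2.eq_iff.1 hh with ⟨g1, g2⟩ | ⟨g1, g2⟩
      · exact hch.2.1 g1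
      · exact hG.2.2.1 g2.symm

lemma R_mark1_to_v1 (hG : IsTriconed G v0 v1 v2) (hsp : B0 = specB0 G v0 v1 v2)
    (hB : IsSpanningTree G B) (hphi : IsPhi1 G v0 v1 v2 B0 B E m)
    {x1 : V} (hm : 1 ≤ m x1) (ht : vType B0 v0 v1 v2 x1 = 1) :
    (SimpleGraph.fromEdgeSet (B \ {s(v0, v1)})).Reachable x1 v1 := by
  rcases mark1_char hG hsp hphi hm ht with h | ⟨hch, hbx⟩
  · rw [h]
  · refine auxReachOfMem (F := B \ {s(v0, v1)}) ⟨hbx, ?_⟩ hch.2.2.ne'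
    intro hh
    rcases Sym2.eq_iff.1 hh with ⟨g1, g2⟩ | ⟨g1, g2⟩
    · exact hch.2.1 g1
    · exact hG.2.1 g2.symm

lemma R_mark2_to_v2 (hG : IsTriconed G v0 v1 v2) (hsp : B0 = specB0 G v0 v1 v2)
    (hB : IsSpanningTree G B) (hphi : IsPhi1 G v0 v1 v2 B0 B E m)
    {x2 : V} (hm : 1 ≤ m x2) (ht : vType B0 v0 v1 v2 x2 = 2) :
    (SimpleGraph.fromEdgeSet (B \ {s(v0, v1)})).Reachable x2 v2 := by
  rcases mark2_char hG hsp hphi hm ht with h | ⟨hch, hbx⟩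
  · rw [h]
  · refine auxReachOfMem (F := B \ {s(v0, v1)}) ⟨hbx, ?_⟩ hch.2.2.2.ne'
    intro hh
    rcases Sym2.eq_iff.1 hh with ⟨g1, g2⟩ | ⟨g1, g2⟩
    · exact hch.2.1 g1
    · exact hG.2.2.1 g2.symm

lemma chain01 (hG : IsTriconed G v0 v1 v2) (hsp : B0 = specB0 G v0 v1 v2)
    (hB : IsSpanningTree G B) (hE : E = B \ B0) (hphi : IsPhi1 G v0 v1 v2 B0 B E m)
    (h01 : s(v0, v1) ∈ B) {u : V}
    (h0 : 1 ≤ markTypeCount B0 v0 v1 v2 E m u 0)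
    (h1 : 1 ≤ markTypeCount B0 v0 v1 v2 E m u 1) : False := by
  obtain ⟨x0, hr0, hc0⟩ := mtc_extract0 h0
  obtain ⟨x1, hr1, hm1, ht1⟩ := mtc_extract1 h1
  have hEsub : E ⊆ B \ {s(v0, v1)} := E_sub_B_minus hE (h01B0 hG hsp)
  have hrr : (SimpleGraph.fromEdgeSet (B \ {s(v0, v1)})).Reachable v0 v1 :=
    ((R_v0_to_mark0 hG hsp hB hE hphi hc0).trans
      (auxReachMono hEsub (hr0.symm.trans hr1))).trans
      (R_mark1_to_v1 hG hsp hB hphi hm1 ht1)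
  exact auxTreeBridge hB.2 h01 hG.2.1 hrr

lemma chain0221 (hG : IsTriconed G v0 v1 v2) (hsp : B0 = specB0 G v0 v1 v2)
    (hB : IsSpanningTree G B) (hE : E = B \ B0) (hphi : IsPhi1 G v0 v1 v2 B0 B E m)
    (h01 : s(v0, v1) ∈ B) {u u' : V}
    (h0 : 1 ≤ markTypeCount B0 v0 v1 v2 E m u 0)
    (h2 : 1 ≤ markTypeCount B0 v0 v1 v2 E m u 2)
    (h2' : 1 ≤ markTypeCount B0 v0 v1 v2 E m u' 2)
    (h1' : 1 ≤ markTypeCount B0 v0 v1 v2 E m u' 1) : False := by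
  obtain ⟨x0, hr0, hc0⟩ := mtc_extract0 h0
  obtain ⟨x2, hr2, hm2, ht2⟩ := mtc_extract2 h2
  obtain ⟨y2, hr2', hm2', ht2'⟩ := mtc_extract2 h2'
  obtain ⟨y1, hr1', hm1', ht1'⟩ := mtc_extract1 h1'
  have hEsub : E ⊆ B \ {s(v0, v1)} := E_sub_B_minus hE (h01B0 hG hsp)
  have hrr : (SimpleGraph.fromEdgeSet (B \ {s(v0, v1)})).Reachable v0 v1 :=
    ((((R_v0_to_mark0 hG hsp hB hE hphi hc0).trans
      (auxReachMono hEsub (hr0.symm.trans hr2))).trans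
      (R_mark2_to_v2 hG hsp hB hphi hm2 ht2)).trans
      (((R_mark2_to_v2 hG hsp hB hphi hm2' ht2').symm).trans
        ((auxReachMono hEsub (hr2'.symm.trans hr1')).trans
          (R_mark1_to_v1 hG hsp hB hphi hm1' ht1'))))
  exact auxTreeBridge hB.2 h01 hG.2.1 hrr

lemma auxMemConcat {α : Type*} {l : List α} {a b : α} (h : a ∈ l.concat b) :
    a ∈ l ∨ a = b := by
  rw [List.concat_eq_append] at h
  rcases List.mem_append.1 h with h' | h'
  · exact Or.inl h'
  · exact Or.inr (List.mem_singleton.1 h')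

lemma b0_form (hG : IsTriconed G v0 v1 v2) (hsp : B0 = specB0 G v0 v1 v2)
    {c b : V} (hmem : s(c, b) ∈ B0) (hc0 : c ≠ v0) :
    (b = v0 ∧ G.Adj v0 c) ∨ (c = v1 ∧ chP1 G v0 v1 b) ∨ (b = v1 ∧ chP1 G v0 v1 c) ∨
    (c = v2 ∧ chP2 G v0 v1 v2 b) ∨ (b = v2 ∧ chP2 G v0 v1 v2 c) := by
  rw [hsp] at hmem
  rcases specB0_cases G v0 v1 v2 hmem with ⟨h₁, h₂⟩ | ⟨h₁, h₂⟩ | ⟨h₁, h₂⟩ |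
    ⟨h₁, h₂⟩ | ⟨h₁, h₂⟩ | ⟨h₁, h₂⟩
  · exact absurd h₁ hc0
  · exact Or.inl ⟨h₁, h₂⟩
  · exact Or.inr (Or.inl ⟨h₁, h₂⟩)
  · exact Or.inr (Or.inr (Or.inl ⟨h₁, h₂⟩))
  · exact Or.inr (Or.inr (Or.inr (Or.inl ⟨h₁, h₂⟩)))
  · exact Or.inr (Or.inr (Or.inr (Or.inr ⟨h₁, h₂⟩)))

lemma cone1_B0 (hsp : B0 = specB0 G v0 v1 v2) {w : V} (hch : chP1 G v0 v1 w) :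
    s(w, v1) ∈ B0 := by
  rw [show s(w, v1) = s(v1, w) from Sym2.eq_swap, hsp]
  exact mem_specB0_ch1 G v0 v1 v2 hch

lemma cone2_B0 (hsp : B0 = specB0 G v0 v1 v2) {w : V} (hch : chP2 G v0 v1 v2 w) :
    s(w, v2) ∈ B0 := by
  rw [show s(w, v2) = s(v2, w) from Sym2.eq_swap, hsp]
  exact mem_specB0_ch2 G v0 v1 v2 hch

open SimpleGraph in
lemma auxSupportReach {H : SimpleGraph V} {a b x : V} {p : H.Walk a b}
    (hx : x ∈ p.support) : H.Reachable a x :=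
  ⟨p.takeUntil x hx⟩

open SimpleGraph in
lemma auxMapLeSupport {G1 G2 : SimpleGraph V} (h : G1 ≤ G2) {a b : V} (p : G1.Walk a b) :
    (p.mapLe h).support = p.support := by
  unfold SimpleGraph.Walk.mapLe
  rw [SimpleGraph.Walk.support_map]
  exact List.map_id _

open SimpleGraph in
lemma auxMapLeEdges {G1 G2 : SimpleGraph V} (h : G1 ≤ G2) {a b : V} (p : G1.Walk a b) :
    (p.mapLe h).edges = p.edges := by
  unfold SimpleGraph.Walk.mapLe
  rw [SimpleGraph.Walk.edges_map]
  have : Sym2.map ⇑(SimpleGraph.Hom.ofLE h) = id := by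
    funext e
    induction e using Sym2.ind with
    | _ x y => rfl
  rw [this, List.map_id]

/-- from an `E`-reachability `a ~ b`, get a path in `B` with all edges in `E` -/
lemma auxEPath (hE : E = B \ B0) {a b : V}
    (hr : (SimpleGraph.fromEdgeSet E).Reachable a b) :
    ∃ p : (SimpleGraph.fromEdgeSet B).Walk a b, p.IsPath ∧ (∀ e ∈ p.edges, e ∈ E) ∧
      (∀ x ∈ p.support, (SimpleGraph.fromEdgeSet E).Reachable a x) := by
  obtain ⟨w0⟩ := hr
  classical
  let pE := w0.toPath
  refine ⟨SimpleGraph.Walk.mapLe (SimpleGraph.fromEdgeSet_mono (E_sub_B hE)) pE.1,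
    SimpleGraph.Walk.IsPath.mapLe _ pE.2, ?_, ?_⟩
  · intro e he
    rw [auxMapLeEdges] at he
    have h2 := pE.1.edges_subset_edgeSet he
    rw [SimpleGraph.edgeSet_fromEdgeSet] at h2
    exact h2.1
  · intro x hx
    rw [auxMapLeSupport] at hx
    exact auxSupportReach hx

lemma notE_02 (hG : IsTriconed G v0 v1 v2) (hsp : B0 = specB0 G v0 v1 v2)
    (hE : E = B \ B0) : s(v0, v2) ∉ E :=
  B0_not_E hE (by rw [hsp]; exact mem_specB0_star G v0 v1 v2 hG.2.2.2.2.2.1)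

/-- P21 from a direct `E`-path `v2 ~ v1` -/
lemma buildP21dir (hG : IsTriconed G v0 v1 v2) (hsp : B0 = specB0 G v0 v1 v2)
    (hE : E = B \ B0) (hr : (SimpleGraph.fromEdgeSet E).Reachable v2 v1) :
    ∃ p : (SimpleGraph.fromEdgeSet B).Walk v2 v1, p.IsPath ∧ s(v0, v2) ∉ p.edges := by
  obtain ⟨p, hp, hpe, -⟩ := auxEPath hE hr
  exact ⟨p, hp, fun hmem => notE_02 hG hsp hE (hpe _ hmem)⟩

/-- P21 when `c` is a child of `v2` with cone in `B`, and `c ~E~ v1` -/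
lemma buildP21A (hG : IsTriconed G v0 v1 v2) (hsp : B0 = specB0 G v0 v1 v2)
    (hB : IsSpanningTree G B) (hE : E = B \ B0) {c : V}
    (hr : (SimpleGraph.fromEdgeSet E).Reachable c v1)
    (hchc : chP2 G v0 v1 v2 c) (hcB : s(c, v2) ∈ B) :
    ∃ p : (SimpleGraph.fromEdgeSet B).Walk v2 v1, p.IsPath ∧ s(v0, v2) ∉ p.edges := by
  obtain ⟨p, hp, hpe, hps⟩ := auxEPath hE hr
  have hadjB : (SimpleGraph.fromEdgeSet B).Adj v2 c :=
    (SimpleGraph.fromEdgeSet_adj B).2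
      ⟨by rw [show s(v2, c) = s(c, v2) from Sym2.eq_swap]; exact hcB, hchc.2.2.2.ne⟩
  refine ⟨SimpleGraph.Walk.cons hadjB p, ?_, ?_⟩
  · rw [SimpleGraph.Walk.cons_isPath_iff]
    refine ⟨hp, fun hmem => ?_⟩
    exact no_chord hB hE hcB (cone2_B0 hsp hchc) hchc.2.2.2.ne' (hps v2 hmem)
  · rw [SimpleGraph.Walk.edges_cons]
    intro hmem
    rcases List.mem_cons.1 hmem with h' | h'
    · rcases Sym2.eq_iff.1 h'.symm with ⟨g1, g2⟩ | ⟨g1, g2⟩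
      · exact hG.2.2.1 g1.symm
      · exact hchc.2.1 g2
    · exact notE_02 hG hsp hE (hpe _ h')

/-- P21 when `c` is a child of `v2`, `c ~E~ w`, `w` a child of `v1` with cone in `B` -/
lemma buildP21B (hG : IsTriconed G v0 v1 v2) (hsp : B0 = specB0 G v0 v1 v2)
    (hB : IsSpanningTree G B) (hE : E = B \ B0) {c w : V}
    (hr : (SimpleGraph.fromEdgeSet E).Reachable c w)
    (hchc : chP2 G v0 v1 v2 c) (hcB : s(c, v2) ∈ B)
    (hchw : chP1 G v0 v1 w) (hwB : s(w, v1) ∈ B) :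
    ∃ p : (SimpleGraph.fromEdgeSet B).Walk v2 v1, p.IsPath ∧ s(v0, v2) ∉ p.edges := by
  obtain ⟨p, hp, hpe, hps⟩ := auxEPath hE hr
  have hadjB : (SimpleGraph.fromEdgeSet B).Adj v2 c :=
    (SimpleGraph.fromEdgeSet_adj B).2
      ⟨by rw [show s(v2, c) = s(c, v2) from Sym2.eq_swap]; exact hcB, hchc.2.2.2.ne⟩
  have hadjW : (SimpleGraph.fromEdgeSet B).Adj w v1 :=
    (SimpleGraph.fromEdgeSet_adj B).2 ⟨hwB, hchw.2.2.ne'⟩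
  have hv1sup : v1 ∉ p.support := by
    intro hmem
    exact no_chord hB hE hwB (cone1_B0 hsp hchw) hchw.2.2.ne'
      (hr.symm.trans (hps v1 hmem))
  have hcat : (p.concat hadjW).IsPath := auxIsPathConcat hp hadjW hv1sup
  refine ⟨SimpleGraph.Walk.cons hadjB (p.concat hadjW), ?_, ?_⟩
  · rw [SimpleGraph.Walk.cons_isPath_iff]
    refine ⟨hcat, fun hmem => ?_⟩
    rw [SimpleGraph.Walk.support_concat] at hmem
    rcases auxMemConcat (a := v2) (l := p.support) (b := v1) (by rwa [List.concat_eq_append]) with h' | h'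
    · exact no_chord hB hE hcB (cone2_B0 hsp hchc) hchc.2.2.2.ne' (hps v2 h')
    · exact hG.2.2.2.1 h'.symm
  · rw [SimpleGraph.Walk.edges_cons, SimpleGraph.Walk.edges_concat]
    intro hmem
    rcases List.mem_cons.1 hmem with h' | h'
    · rcases Sym2.eq_iff.1 h'.symm with ⟨g1, g2⟩ | ⟨g1, g2⟩
      · exact hG.2.2.1 g1.symm
      · exact hchc.2.1 g2
    · rcases auxMemConcat h' with h'' | h''
      · exact notE_02 hG hsp hE (hpe _ h'')
      · rcases Sym2.eq_iff.1 h''.symm with ⟨g1, g2⟩ | ⟨g1, g2⟩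
        · exact hchw.2.1 g1
        · exact hG.2.1 g2.symm

lemma dm_exists (hG : IsTriconed G v0 v1 v2) (hsp : B0 = specB0 G v0 v1 v2)
    (hB : IsSpanningTree G B) (hE : E = B \ B0) (hphi : IsPhi1 G v0 v1 v2 B0 B E m)
    (h02 : s(v0, v2) ∈ B)
    (hP : ∃ p : (SimpleGraph.fromEdgeSet B).Walk v2 v1, p.IsPath ∧ s(v0, v2) ∉ p.edges) :
    1 ≤ bpMult B0 v0 v1 v2 E m 0 2 := by
  obtain ⟨p, hp, h02e⟩ := hP
  have hex : ∃ j : ℕ, ∃ e, p.edges[j]? = some e ∧ e ∉ B0 := by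
    by_contra hno
    have hall : ∀ e ∈ p.edges, e ∈ (SimpleGraph.fromEdgeSet (B0 \ {s(v0, v2)})).edgeSet := by
      intro e he
      rw [SimpleGraph.edgeSet_fromEdgeSet]
      obtain ⟨j, hje⟩ := List.mem_iff_getElem?.1 he
      have heB0 : e ∈ B0 := by
        by_contra hn
        exact hno ⟨j, e, hje, hn⟩
      refine ⟨⟨heB0, fun h02eq => h02e (by rw [← Set.mem_singleton_iff.1 h02eq]; exact he)⟩, ?_⟩
      have h2 := p.edges_subset_edgeSet he
      rw [SimpleGraph.edgeSet_fromEdgeSet] at h2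
      exact h2.2
    have hreach : (SimpleGraph.fromEdgeSet (B0 \ {s(v0, v2)})).Reachable v2 v1 :=
      ⟨p.transfer _ hall⟩
    obtain ⟨hconn, hn01, hn02, hn12, ha1, ha2, htri⟩ := hG
    have hcl : ∀ a b : V, s(a, b) ∈ B0 \ {s(v0, v2)} →
        a ∈ {z | z = v2 ∨ chP2 G v0 v1 v2 z} →
        b ∈ {z | z = v2 ∨ chP2 G v0 v1 v2 z} := by
      rintro a b ⟨hmem, hne⟩ ha
      rw [Set.mem_singleton_iff] at hne
      rw [hsp] at hmem
      rcases specB0_cases G v0 v1 v2 hmem with ⟨h₁, h₂⟩ | ⟨h₁, h₂⟩ | ⟨h₁, h₂⟩ |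
        ⟨h₁, h₂⟩ | ⟨h₁, h₂⟩ | ⟨h₁, h₂⟩
      · rcases ha with h' | h'
        · exact absurd (h'.symm.trans h₁).symm hn02
        · exact absurd h₁ h'.2.1
      · rcases ha with h' | h'
        · exact absurd (by rw [h', h₁]; exact Sym2.eq_swap) hne
        · exact absurd h₂ h'.1
      · rcases ha with h' | h'
        · exact absurd (h'.symm.trans h₁).symm hn12
        · rw [h₁] at h'
          exact absurd ha1 h'.1
      · rcases ha with h' | h'
        · rw [h'] at h₂
          exact absurd ha2 h₂.1
        · exact absurd h₂.2.2 h'.2.2.1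
      · exact Or.inr h₂
      · exact Or.inl h₁
    have := auxReachClosed hcl hreach (Or.inl rfl)
    rcases this with h' | h'
    · exact hn12 h'
    · exact h'.1 ha1
  classical
  have hfind := Nat.find_spec hex
  obtain ⟨e0, he0, he0n⟩ := hfind
  have hdm : DoublyMarkedAt B0 B v0 v1 v2 (p.getVert (Nat.find hex)) := by
    refine ⟨h02, p, hp, h02e, Nat.find hex, ?_, ⟨e0, he0, he0n⟩, rfl⟩
    intro j hj e hje
    by_contra hn
    exact Nat.find_min hex hj ⟨e, hje, hn⟩
  have hm2 : m (p.getVert (Nat.find hex)) = 2 := (hphi.2.2.2 _).2 hdm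
  have hz0 : p.getVert (Nat.find hex) ≠ v0 := by
    intro h
    have hmv0 := m_v0_eq hphi hG
    rw [h] at hm2
    omega
  have hmk2 := m2_to_mark2 hG hsp hphi hm2
  exact bp02_of hG hsp hB hE hphi hz0
    (mtc_lower2 (SimpleGraph.Reachable.refl _) hm2)
    (mtc_lower (SimpleGraph.Reachable.refl _) hmk2.1 hmk2.2)

/-- P21 from `v2 ~E~ w` with `w` a child of `v1` -/
lemma buildP21W (hG : IsTriconed G v0 v1 v2) (hsp : B0 = specB0 G v0 v1 v2)
    (hB : IsSpanningTree G B) (hE : E = B \ B0) {w : V}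
    (hr : (SimpleGraph.fromEdgeSet E).Reachable v2 w)
    (hchw : chP1 G v0 v1 w) (hwB : s(w, v1) ∈ B) :
    ∃ p : (SimpleGraph.fromEdgeSet B).Walk v2 v1, p.IsPath ∧ s(v0, v2) ∉ p.edges := by
  obtain ⟨p, hp, hpe, hps⟩ := auxEPath hE hr
  have hadjW : (SimpleGraph.fromEdgeSet B).Adj w v1 :=
    (SimpleGraph.fromEdgeSet_adj B).2 ⟨hwB, hchw.2.2.ne'⟩
  have hv1sup : v1 ∉ p.support := by
    intro hmem
    exact no_chord hB hE hwB (cone1_B0 hsp hchw) hchw.2.2.ne'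
      (hr.symm.trans (hps v1 hmem))
  refine ⟨p.concat hadjW, auxIsPathConcat hp hadjW hv1sup, ?_⟩
  rw [SimpleGraph.Walk.edges_concat]
  intro hmem
  rcases auxMemConcat hmem with h' | h'
  · exact notE_02 hG hsp hE (hpe _ h')
  · rcases Sym2.eq_iff.1 h' with ⟨g1, g2⟩ | ⟨g1, g2⟩
    · exact hchw.2.1 g1.symm
    · exact hG.2.1 g1

lemma engine (hG : IsTriconed G v0 v1 v2) (hsp : B0 = specB0 G v0 v1 v2)
    (hB : IsSpanningTree G B) (hE : E = B \ B0) (hphi : IsPhi1 G v0 v1 v2 B0 B E m)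
    (h01 : s(v0, v1) ∉ B) :
    ∀ {c r : V} (q : (SimpleGraph.fromEdgeSet B).Walk c r), v0 = r → q.IsPath →
      ((SimpleGraph.fromEdgeSet E).Reachable c v1 ∨
       (∃ w, (SimpleGraph.fromEdgeSet E).Reachable c w ∧ chP1 G v0 v1 w ∧ s(w, v1) ∈ B) ∨
       ((SimpleGraph.fromEdgeSet E).Reachable c v2 ∧
         (1 ≤ bpMult B0 v0 v1 v2 E m 2 1 ∨ 1 ≤ bpMult B0 v0 v1 v2 E m 0 1) ∧
         (∃ p : (SimpleGraph.fromEdgeSet B).Walk v2 v1, p.IsPath ∧ s(v0, v2) ∉ p.edges)) ∨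
       ((∃ u', (SimpleGraph.fromEdgeSet E).Reachable c u' ∧ chP2 G v0 v1 v2 u' ∧
           s(u', v2) ∈ B) ∧
         (1 ≤ bpMult B0 v0 v1 v2 E m 2 1 ∨ 1 ≤ bpMult B0 v0 v1 v2 E m 0 1) ∧
         v2 ∉ q.support)) →
      (1 ≤ bpMult B0 v0 v1 v2 E m 0 1 ∨
        (1 ≤ bpMult B0 v0 v1 v2 E m 0 2 ∧ 1 ≤ bpMult B0 v0 v1 v2 E m 2 1)) := by
  intro c r q
  induction q with
  | nil =>
    intro hr _ hst
    subst hr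
    exfalso
    rcases hst with hA | ⟨w, hrw, hch, -⟩ | ⟨hr2, -, -⟩ | ⟨⟨u', hru, hch2, -⟩, -, -⟩
    · exact hG.2.1 (v0_isolated hG hsp hB hE hA).symm
    · exact hch.2.1 (v0_isolated hG hsp hB hE hrw)
    · exact hG.2.2.1 (v0_isolated hG hsp hB hE hr2).symm
    · exact hch2.2.1 (v0_isolated hG hsp hB hE hru)
  | @cons c b d h q ih =>
    intro hr hq hst
    subst hr
    obtain ⟨hqp, hcsup⟩ := (SimpleGraph.Walk.cons_isPath_iff h q).1 hq
    have hcb : s(c, b) ∈ B := ((SimpleGraph.fromEdgeSet_adj B).1 h).1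
    have hncb : c ≠ b := ((SimpleGraph.fromEdgeSet_adj B).1 h).2
    have hc0 : c ≠ v0 := fun hh => hcsup (by rw [hh]; exact q.end_mem_support)
    by_cases hEcb : s(c, b) ∈ E
    · have hrcb : (SimpleGraph.fromEdgeSet E).Reachable c b := auxReachOfMem hEcb hncb
      apply ih rfl hqp
      rcases hst with hA | ⟨w, hrw, hch, hwB⟩ | ⟨hr2, hXc, hPc⟩ |
        ⟨⟨u', hru, hch2, huB⟩, hXd, hsup⟩
      · exact Or.inl (hrcb.symm.trans hA)
      · exact Or.inr (Or.inl ⟨w, hrcb.symm.trans hrw, hch, hwB⟩)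
      · exact Or.inr (Or.inr (Or.inl ⟨hrcb.symm.trans hr2, hXc, hPc⟩))
      · refine Or.inr (Or.inr (Or.inr ⟨⟨u', hrcb.symm.trans hru, hch2, huB⟩, hXd, ?_⟩))
        intro hv2
        exact hsup (by rw [SimpleGraph.Walk.support_cons]; exact List.mem_cons_of_mem _ hv2)
    · have hcbB0 : s(c, b) ∈ B0 := by
        rcases mem_E_or_B0 hE hcb with h' | h'
        · exact absurd h' hEcb
        · exact h'
      rcases b0_form hG hsp hcbB0 hc0 with ⟨hbv0, hadj⟩ | ⟨hcv1, hchb⟩ | ⟨hbv1, hchc1⟩ |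
        ⟨hcv2, hchb⟩ | ⟨hbv2, hchc⟩
      · -- terminal: b = v0
        have hcv0B : s(c, v0) ∈ B := by rw [← hbv0]; exact hcb
        have hcne1 : c ≠ v1 := by
          intro hh
          apply h01
          rw [show s(v0, v1) = s(v1, v0) from Sym2.eq_swap, ← hh, ← hbv0]
          exact hcb
        by_cases hcv2 : c = v2
        · have h02B : s(v0, v2) ∈ B := by
            rw [show s(v0, v2) = s(v2, v0) from Sym2.eq_swap, ← hcv2, ← hbv0]
            exact hcb
          rcases hst with hA | ⟨w, hrw, hch, hwB⟩ | ⟨hr2, hXc, hPc⟩ |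
            ⟨⟨u', hru, hch2, huB⟩, hXd, hsup⟩
          · have hr21 : (SimpleGraph.fromEdgeSet E).Reachable v2 v1 := by
              rw [← hcv2]; exact hA
            have hbp02 := dm_exists hG hsp hB hE hphi h02B (buildP21dir hG hsp hE hr21)
            have hX := bp21_of hG hsp hB hE hphi (u := v1) (fun hh => hG.2.1 hh.symm)
              (mtc_lower hr21.symm (mark_v2 hphi) (vType_v2 hG hsp))
              (mtc_lower (SimpleGraph.Reachable.refl v1) (mark_v1 hphi) (vType_v1 hG))
            rcases hX with hX | hX
            · exact Or.inr ⟨hbp02, hX⟩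
            · exact Or.inl hX
          · have hrw' : (SimpleGraph.fromEdgeSet E).Reachable v2 w := by
              rw [← hcv2]; exact hrw
            have hbp02 := dm_exists hG hsp hB hE hphi h02B
              (buildP21W hG hsp hB hE hrw' hch hwB)
            have hX := bp21_of hG hsp hB hE hphi hch.2.1
              (mtc_lower hrw'.symm (mark_v2 hphi) (vType_v2 hG hsp))
              (mtc_lower (SimpleGraph.Reachable.refl w)
                (mark_of_ch1 hG hsp hphi hch hwB) (vType_chP1 hG hsp hch))
            rcases hX with hX | hX
            · exact Or.inr ⟨hbp02, hX⟩
            · exact Or.inl hX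
          · have hbp02 := dm_exists hG hsp hB hE hphi h02B hPc
            rcases hXc with hX | hX
            · exact Or.inr ⟨hbp02, hX⟩
            · exact Or.inl hX
          · exfalso
            have hru' : (SimpleGraph.fromEdgeSet E).Reachable v2 u' := by
              rw [← hcv2]; exact hru
            exact no_chord hB hE huB (cone2_B0 hsp hch2) hch2.2.2.2.ne' hru'.symm
        · have hmc : 1 ≤ m c := mark_of_N0 hG hsp hphi hadj hcv0B
          have htc := vType_N0 hG hsp hadj hcne1 hcv2
          rcases hst with hA | ⟨w, hrw, hch, hwB⟩ | ⟨hr2, hXc, hPc⟩ |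
            ⟨⟨u', hru, hch2, huB⟩, hXd, hsup⟩
          · exact Or.inl (bp01_of hG hsp hB hE hphi hc0
              (mtc_lower (SimpleGraph.Reachable.refl c) hmc htc)
              (mtc_lower hA (mark_v1 hphi) (vType_v1 hG)))
          · exact Or.inl (bp01_of hG hsp hB hE hphi hc0
              (mtc_lower (SimpleGraph.Reachable.refl c) hmc htc)
              (mtc_lower hrw (mark_of_ch1 hG hsp hphi hch hwB) (vType_chP1 hG hsp hch)))
          · have hbp02 := bp02_of hG hsp hB hE hphi hc0
              (mtc_lower (SimpleGraph.Reachable.refl c) hmc htc)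
              (mtc_lower hr2 (mark_v2 hphi) (vType_v2 hG hsp))
            rcases hXc with hX | hX
            · exact Or.inr ⟨hbp02, hX⟩
            · exact Or.inl hX
          · have hbp02 := bp02_of hG hsp hB hE hphi hc0
              (mtc_lower (SimpleGraph.Reachable.refl c) hmc htc)
              (mtc_lower hru (mark_of_ch2 hG hsp hphi hch2 huB) (vType_chP2 hG hsp hch2))
            rcases hXd with hX | hX
            · exact Or.inr ⟨hbp02, hX⟩
            · exact Or.inl hX
      · -- c = v1, b a child of v1
        apply ih rfl hqp
        refine Or.inr (Or.inl ⟨b, SimpleGraph.Reachable.refl b, hchb, ?_⟩)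
        rw [show s(b, v1) = s(v1, b) from Sym2.eq_swap, ← hcv1]
        exact hcb
      · -- b = v1
        apply ih rfl hqp
        apply Or.inl
        rw [hbv1]
      · -- c = v2, b a child of v2
        have hsupD : v2 ∉ q.support := by rw [← hcv2]; exact hcsup
        have hbB : s(b, v2) ∈ B := by
          rw [show s(b, v2) = s(v2, b) from Sym2.eq_swap, ← hcv2]
          exact hcb
        have hX : 1 ≤ bpMult B0 v0 v1 v2 E m 2 1 ∨ 1 ≤ bpMult B0 v0 v1 v2 E m 0 1 := by
          rcases hst with hA | ⟨w, hrw, hch, hwB⟩ | ⟨hr2, hXc, hPc⟩ |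
            ⟨⟨u', hru, hch2, huB⟩, hXd, hsup⟩
          · have hr21 : (SimpleGraph.fromEdgeSet E).Reachable v2 v1 := by
              rw [← hcv2]; exact hA
            exact bp21_of hG hsp hB hE hphi (fun hh => hG.2.1 hh.symm)
              (mtc_lower hr21.symm (mark_v2 hphi) (vType_v2 hG hsp))
              (mtc_lower (SimpleGraph.Reachable.refl v1) (mark_v1 hphi) (vType_v1 hG))
          · have hrw' : (SimpleGraph.fromEdgeSet E).Reachable v2 w := by
              rw [← hcv2]; exact hrw
            exact bp21_of hG hsp hB hE hphi hch.2.1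
              (mtc_lower hrw'.symm (mark_v2 hphi) (vType_v2 hG hsp))
              (mtc_lower (SimpleGraph.Reachable.refl w)
                (mark_of_ch1 hG hsp hphi hch hwB) (vType_chP1 hG hsp hch))
          · exact hXc
          · exfalso
            have hru' : (SimpleGraph.fromEdgeSet E).Reachable v2 u' := by
              rw [← hcv2]; exact hru
            exact no_chord hB hE huB (cone2_B0 hsp hch2) hch2.2.2.2.ne' hru'.symm
        apply ih rfl hqp
        exact Or.inr (Or.inr (Or.inr ⟨⟨b, SimpleGraph.Reachable.refl b, hchb, hbB⟩, hX, hsupD⟩))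
      · -- b = v2, c a child of v2
        have hcB2 : s(c, v2) ∈ B := by rw [← hbv2]; exact hcb
        have hmc2 : 1 ≤ m c := mark_of_ch2 hG hsp hphi hchc hcB2
        rcases hst with hA | ⟨w, hrw, hch, hwB⟩ | ⟨hr2, hXc, hPc⟩ |
          ⟨⟨u', hru, hch2, huB⟩, hXd, hsup⟩
        · have hX := bp21_of hG hsp hB hE hphi hchc.2.1
            (mtc_lower (SimpleGraph.Reachable.refl c) hmc2 (vType_chP2 hG hsp hchc))
            (mtc_lower hA (mark_v1 hphi) (vType_v1 hG))
          have hP := buildP21A hG hsp hB hE hA hchc hcB2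
          apply ih rfl hqp
          refine Or.inr (Or.inr (Or.inl ⟨?_, hX, hP⟩))
          rw [hbv2]
        · have hX := bp21_of hG hsp hB hE hphi hchc.2.1
            (mtc_lower (SimpleGraph.Reachable.refl c) hmc2 (vType_chP2 hG hsp hchc))
            (mtc_lower hrw (mark_of_ch1 hG hsp hphi hch hwB) (vType_chP1 hG hsp hch))
          have hP := buildP21B hG hsp hB hE hrw hchc hcB2 hch hwB
          apply ih rfl hqp
          refine Or.inr (Or.inr (Or.inl ⟨?_, hX, hP⟩))
          rw [hbv2]
        · exact absurd hr2
            (fun hr => no_chord hB hE hcB2 (cone2_B0 hsp hchc) hchc.2.2.2.ne' hr)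
        · exfalso
          apply hsup
          rw [SimpleGraph.Walk.support_cons]
          refine List.mem_cons_of_mem _ ?_
          rw [← hbv2]
          exact q.start_mem_support

variable (G) (v0 v1 v2) (B0)

theorem statement8
    (hG : IsTriconed G v0 v1 v2)
    (hvo : VertexOrderSpec G v0 v1 v2)
    (heo : EdgeOrderSpec G v0 v1 v2)
    (hnc : NoColoops G)
    (hB0 : IsMinSpanningTree G B0)
    (B : Set (Sym2 V)) (hB : IsSpanningTree G B)
    (E : Set (Sym2 V)) (m : V → ℕ)
    (hphi : IsPhi1 G v0 v1 v2 B0 B E m) :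
    s(v0, v1) ∈ B ↔ ¬bpConnected B0 v0 v1 v2 E m 0 1 := by
  have hsp : B0 = specB0 G v0 v1 v2 := B0_eq_spec G v0 v1 v2 B0 hG heo hB0
  have hE : E = B \ B0 := E_eq_diff hG hsp hB hphi
  constructor
  · intro h01mem hbp
    rcases hbp with hz | hb | ⟨cc, hcmem, hcn0, hcn1, hca, hcb⟩
    · exact absurd hz (by omega)
    · obtain ⟨u, hu, hcond⟩ := bp_extract hb
      rcases hcond with ⟨-, -, ha0, ha1⟩ | ⟨h3, -⟩
      · exact chain01 hG hsp hB hE hphi h01mem ha0 ha1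
      · have hsplit := compMarks_split hG hsp hphi u
        have hm0 := mtc_le_one hG hsp hB hE hphi u 0
        have hm1 := mtc_le_one hG hsp hB hE hphi u 1
        have hm2 := mtc_le_one hG hsp hB hE hphi u 2
        exact chain01 hG hsp hB hE hphi h01mem (u := u) (by omega) (by omega)
    · have hcc : cc = 2 := by
        simp only [Set.mem_insert_iff, Set.mem_singleton_iff] at hcmem
        rcases hcmem with h | h | h <;> omega
      subst hcc
      obtain ⟨u, hu, hcond⟩ := bp_extract hca
      obtain ⟨u', hu', hcond'⟩ := bp_extract hcb
      rcases hcond with ⟨-, -, ha0, ha2⟩ | ⟨h3, -⟩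
      · rcases hcond' with ⟨-, -, hb2, hb1⟩ | ⟨h3', -⟩
        · exact chain0221 hG hsp hB hE hphi h01mem ha0 ha2 hb2 hb1
        · have hsplit := compMarks_split hG hsp hphi u'
          have hm0 := mtc_le_one hG hsp hB hE hphi u' 0
          have hm1 := mtc_le_one hG hsp hB hE hphi u' 1
          have hm2 := mtc_le_one hG hsp hB hE hphi u' 2
          exact chain01 hG hsp hB hE hphi h01mem (u := u') (by omega) (by omega)
      · have hsplit := compMarks_split hG hsp hphi u
        have hm0 := mtc_le_one hG hsp hB hE hphi u 0
        have hm1 := mtc_le_one hG hsp hB hE hphi u 1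
        have hm2 := mtc_le_one hG hsp hB hE hphi u 2
        exact chain01 hG hsp hB hE hphi h01mem (u := u) (by omega) (by omega)
  · intro hnb
    by_contra h01
    apply hnb
    have hreach : (SimpleGraph.fromEdgeSet B).Reachable v1 v0 :=
      hB.2.isConnected.preconnected v1 v0
    obtain ⟨w0⟩ := hreach
    classical
    have hres := engine hG hsp hB hE hphi h01 (w0.toPath).1 rfl (w0.toPath).2
      (Or.inl (SimpleGraph.Reachable.refl v1))
    rcases hres with h | ⟨ha, hb⟩
    · exact Or.inr (Or.inl h)
    · refine Or.inr (Or.inr ⟨2, by simp, by omega, by omega, ha, hb⟩)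

end Statements
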